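/- arXiv:1607.08480 — 7 statements merged into one kernel-verified Lean document; each statement's English description precedes it below -/
import Mathlib

section
/- Let ζ be a clock region over K-bounded clock valuations, and let f and g be simple functions. Then either f(ν) ≤ g(ν) for all ν ∈ ζ, or g(ν) ≤ f(ν) for all ν ∈ ζ; equivalently, the pointwise minimum of f and g restricted to ζ coincides with f or with g on all of ζ, and likewise for the pointwise maximum. -/
/-- Comparison relations appearing in clock constraints. -/
inductive ClockRel : Type
  | lt | gt | eq | le | ge

/-- Interpretation of a comparison relation. -/
def ClockRel.holds : ClockRel → ℝ → ℝ → Prop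
  | .lt, x, y => x < y
  | .gt, x, y => x > y
  | .eq, x, y => x = y
  | .le, x, y => x ≤ y
  | .ge, x, y => x ≥ y

/-- A simple clock constraint: `c ⋈ i` or `c − c' ⋈ i` with `i : ℕ`. -/
inductive ClockConstraint (𝒞 : Type) : Type
  | single (c : 𝒞) (r : ClockRel) (i : ℕ)
  | diff (c c' : 𝒞) (r : ClockRel) (i : ℕ)

/-- Satisfaction of a clock constraint by a clock valuation. -/
def ClockConstraint.sat {𝒞 : Type} (ν : 𝒞 → ℝ) : ClockConstraint 𝒞 → Prop
  | .single c r i => r.holds (ν c) i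
  | .diff c c' r i => r.holds (ν c - ν c') i

/-- The integer constant appearing in a clock constraint. -/
def ClockConstraint.bound {𝒞 : Type} : ClockConstraint 𝒞 → ℕ
  | .single _ _ i => i
  | .diff _ _ _ i => i

/-- Two valuations are region-equivalent (with bound `K`) if they satisfy the
same clock constraints with constants at most `K`. -/
def RegionEquiv {𝒞 : Type} (K : ℕ) (ν ν' : 𝒞 → ℝ) : Prop :=
  ∀ φ : ClockConstraint 𝒞, φ.bound ≤ K → (φ.sat ν ↔ φ.sat ν')

/-- A clock region over `K`-bounded valuations: an equivalence class of the
region-equivalence relation inside the set of `K`-bounded valuations. -/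
def IsBoundedRegion {𝒞 : Type} (K : ℕ) (ζ : Set (𝒞 → ℝ)) : Prop :=
  ∃ ν₀ : 𝒞 → ℝ, (∀ c, 0 ≤ ν₀ c ∧ ν₀ c ≤ (K : ℝ)) ∧
    ζ = {ν | (∀ c, 0 ≤ ν c ∧ ν c ≤ (K : ℝ)) ∧ RegionEquiv K ν₀ ν}

/-- A simple function on clock valuations: either constantly a natural number
`d`, or of the form `ν ↦ d − ν(c)` for some `d : ℕ` and clock `c`. -/
def IsSimpleFun {𝒞 : Type} (f : (𝒞 → ℝ) → ℝ) : Prop :=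
  (∃ d : ℕ, ∀ ν : 𝒞 → ℝ, f ν = d) ∨
  (∃ d : ℕ, ∃ c : 𝒞, ∀ ν : 𝒞 → ℝ, f ν = d - ν c)

section Aux
variable {𝒞 : Type}

private lemma comp_const_diff (K : ℕ) (ν₀ : 𝒞 → ℝ) (d e : ℕ) (c : 𝒞) :
    (∀ ν : 𝒞 → ℝ, ((∀ x, 0 ≤ ν x ∧ ν x ≤ (K:ℝ)) ∧ RegionEquiv K ν₀ ν) →
        (d:ℝ) ≤ (e:ℝ) - ν c) ∨
    (∀ ν : 𝒞 → ℝ, ((∀ x, 0 ≤ ν x ∧ ν x ≤ (K:ℝ)) ∧ RegionEquiv K ν₀ ν) →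
        (e:ℝ) - ν c ≤ (d:ℝ)) := by
  rcases le_or_gt e d with h | h
  · right; rintro ν ⟨hb, -⟩
    have h' : (e:ℝ) ≤ (d:ℝ) := by exact_mod_cast h
    linarith [(hb c).1]
  · set m := e - d with hm
    have hcast : (m:ℝ) = (e:ℝ) - (d:ℝ) := by
      rw [hm, Nat.cast_sub h.le]
    rcases le_or_gt m K with hK | hK
    · by_cases h0 : ClockConstraint.sat ν₀ (.single c .le m)
      · left; rintro ν ⟨hb, hr⟩
        have hs := (hr (.single c .le m) hK).mp h0
        simp only [ClockConstraint.sat, ClockRel.holds] at hs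
        linarith
      · right; rintro ν ⟨hb, hr⟩
        have hs := (hr (.single c .le m) hK).not.mp h0
        simp only [ClockConstraint.sat, ClockRel.holds, not_le] at hs
        linarith
    · left; rintro ν ⟨hb, -⟩
      have hK' : (K:ℝ) < (m:ℝ) := by exact_mod_cast hK
      linarith [(hb c).2]

private lemma comp_diff_diff (K : ℕ) (ν₀ : 𝒞 → ℝ) (d e : ℕ) (hde : d ≤ e)
    (c c' : 𝒞) :
    (∀ ν : 𝒞 → ℝ, ((∀ x, 0 ≤ ν x ∧ ν x ≤ (K:ℝ)) ∧ RegionEquiv K ν₀ ν) →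
        (d:ℝ) - ν c ≤ (e:ℝ) - ν c') ∨
    (∀ ν : 𝒞 → ℝ, ((∀ x, 0 ≤ ν x ∧ ν x ≤ (K:ℝ)) ∧ RegionEquiv K ν₀ ν) →
        (e:ℝ) - ν c' ≤ (d:ℝ) - ν c) := by
  set m := e - d with hm
  have hcast : (m:ℝ) = (e:ℝ) - (d:ℝ) := by rw [hm, Nat.cast_sub hde]
  rcases le_or_gt m K with hK | hK
  · by_cases h0 : ClockConstraint.sat ν₀ (.diff c' c .le m)
    · left; rintro ν ⟨hb, hr⟩
      have hs := (hr (.diff c' c .le m) hK).mp h0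
      simp only [ClockConstraint.sat, ClockRel.holds] at hs
      linarith
    · right; rintro ν ⟨hb, hr⟩
      have hs := (hr (.diff c' c .le m) hK).not.mp h0
      simp only [ClockConstraint.sat, ClockRel.holds, not_le] at hs
      linarith
  · left; rintro ν ⟨hb, -⟩
    have hK' : (K:ℝ) < (m:ℝ) := by exact_mod_cast hK
    linarith [(hb c').2, (hb c).1]

end Aux

/-- On a clock region, any two simple functions are
comparable: one dominates the other on the whole region; equivalently, their
pointwise minimum (resp. maximum) coincides on the region with one of them. -/
theorem simple_functions_comparable_on_region {𝒞 : Type} [Fintype 𝒞]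
    [Nonempty 𝒞] (K : ℕ) (ζ : Set (𝒞 → ℝ)) (hζ : IsBoundedRegion K ζ)
    (f g : (𝒞 → ℝ) → ℝ) (hf : IsSimpleFun f) (hg : IsSimpleFun g) :
    ((∀ ν ∈ ζ, f ν ≤ g ν) ∨ (∀ ν ∈ ζ, g ν ≤ f ν)) ∧
    ((∀ ν ∈ ζ, min (f ν) (g ν) = f ν) ∨ (∀ ν ∈ ζ, min (f ν) (g ν) = g ν)) ∧
    ((∀ ν ∈ ζ, max (f ν) (g ν) = f ν) ∨ (∀ ν ∈ ζ, max (f ν) (g ν) = g ν)) := by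

  obtain ⟨ν₀, hν₀, rfl⟩ := hζ
  have key : (∀ ν ∈ {ν | (∀ c, 0 ≤ ν c ∧ ν c ≤ (K:ℝ)) ∧ RegionEquiv K ν₀ ν},
      f ν ≤ g ν) ∨ (∀ ν ∈ {ν | (∀ c, 0 ≤ ν c ∧ ν c ≤ (K:ℝ)) ∧ RegionEquiv K ν₀ ν},
      g ν ≤ f ν) := by
    rcases hf with ⟨d, hd⟩ | ⟨d, c, hd⟩ <;> rcases hg with ⟨e, he⟩ | ⟨e, c', he⟩
    · rcases le_total (d:ℝ) (e:ℝ) with h | h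
      · exact Or.inl fun ν _ => by rw [hd, he]; exact h
      · exact Or.inr fun ν _ => by rw [hd, he]; exact h
    · rcases comp_const_diff K ν₀ d e c' with h | h
      · exact Or.inl fun ν hν => by rw [hd, he]; exact h ν hν
      · exact Or.inr fun ν hν => by rw [hd, he]; exact h ν hν
    · rcases comp_const_diff K ν₀ e d c with h | h
      · exact Or.inr fun ν hν => by rw [hd, he]; exact h ν hν
      · exact Or.inl fun ν hν => by rw [hd, he]; exact h ν hν
    · rcases le_total d e with hde | hde
      · rcases comp_diff_diff K ν₀ d e hde c c' with h | h
        · exact Or.inl fun ν hν => by rw [hd, he]; exact h ν hν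
        · exact Or.inr fun ν hν => by rw [hd, he]; exact h ν hν
      · rcases comp_diff_diff K ν₀ e d hde c' c with h | h
        · exact Or.inr fun ν hν => by rw [hd, he]; exact h ν hν
        · exact Or.inl fun ν hν => by rw [hd, he]; exact h ν hν
  refine ⟨key, ?_, ?_⟩
  · rcases key with h | h
    · exact Or.inl fun ν hν => min_eq_left (h ν hν)
    · exact Or.inr fun ν hν => min_eq_right (h ν hν)
  · rcases key with h | h
    · exact Or.inr fun ν hν => max_eq_right (h ν hν)
    · exact Or.inl fun ν hν => max_eq_left (h ν hν)
end

section
/- Let ζ be a clock region over K-bounded clock valuations and let f₁, ..., f_m (m ≥ 1) be simple functions. Then there exist indices j and j' such that f_j(ν) = min_{1≤i≤m} f_i(ν) and f_{j'}(ν) = max_{1≤i≤m} f_i(ν) for all ν ∈ ζ; in particular, the pointwise minimum and maximum of finitely many simple functions, restricted to a clock region, agree on that region with one of the given simple functions. -/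
lemma simple_le_transfer {𝒞 : Type} (K : ℕ) {ν ν' : 𝒞 → ℝ}
    (hν : ∀ c, 0 ≤ ν c ∧ ν c ≤ (K : ℝ)) (hν' : ∀ c, 0 ≤ ν' c ∧ ν' c ≤ (K : ℝ))
    (heq : RegionEquiv K ν ν') {f g : (𝒞 → ℝ) → ℝ}
    (hf : IsSimpleFun f) (hg : IsSimpleFun g) (h : f ν ≤ g ν) : f ν' ≤ g ν' := by
  rcases hf with ⟨d, hd⟩ | ⟨d, c, hd⟩ <;> rcases hg with ⟨e, he⟩ | ⟨e, c', he⟩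
  · rw [hd, he]; rw [hd, he] at h; exact h
  · -- d ≤ e - ν c'
    rw [hd, he] at h ⊢
    rcases le_or_gt d e with hde | hde
    · rcases le_or_gt (e - d) K with hK | hK
      · have hcon := heq (.single c' .le (e - d)) hK
        simp only [ClockConstraint.sat, ClockRel.holds] at hcon
        have hcast : ((e - d : ℕ) : ℝ) = (e : ℝ) - d := by
          push_cast [Nat.cast_sub hde]; ring
        rw [hcast] at hcon
        have := hcon.mp (by linarith)
        linarith
      · have h1 := (hν' c').2
        have h2 : ((e - d : ℕ) : ℝ) = (e : ℝ) - d := by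
          push_cast [Nat.cast_sub hde]; ring
        have h3 : (K : ℝ) < ((e - d : ℕ) : ℝ) := by exact_mod_cast hK
        linarith
    · have h0 := (hν c').1
      have : (e : ℝ) < d := by exact_mod_cast hde
      linarith
  · -- d - ν c ≤ e
    rw [hd, he] at h ⊢
    rcases le_or_gt d e with hde | hde
    · have h0 := (hν' c).1
      have : (d : ℝ) ≤ e := by exact_mod_cast hde
      linarith
    · have hcast : ((d - e : ℕ) : ℝ) = (d : ℝ) - e := by
        push_cast [Nat.cast_sub hde.le]; ring
      have hK : d - e ≤ K := by
        have h1 := (hν c).2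
        have h0 := (hν c).1
        have : ((d - e : ℕ) : ℝ) ≤ (K : ℝ) := by rw [hcast]; linarith
        exact_mod_cast this
      have hcon := heq (.single c .ge (d - e)) hK
      simp only [ClockConstraint.sat, ClockRel.holds] at hcon
      rw [hcast] at hcon
      have := hcon.mp (by linarith)
      linarith
  · -- d - ν c ≤ e - ν c'
    rw [hd, he] at h ⊢
    rcases le_or_gt d e with hde | hde
    · rcases le_or_gt (e - d) K with hK | hK
      · have hcon := heq (.diff c' c .le (e - d)) hK
        simp only [ClockConstraint.sat, ClockRel.holds] at hcon
        have hcast : ((e - d : ℕ) : ℝ) = (e : ℝ) - d := by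
          push_cast [Nat.cast_sub hde]; ring
        rw [hcast] at hcon
        have := hcon.mp (by linarith)
        linarith
      · have h1 := (hν' c').2
        have h2 := (hν' c).1
        have h3 : (K : ℝ) < ((e - d : ℕ) : ℝ) := by exact_mod_cast hK
        have hcast : ((e - d : ℕ) : ℝ) = (e : ℝ) - d := by
          push_cast [Nat.cast_sub hde]; ring
        linarith
    · have hcast : ((d - e : ℕ) : ℝ) = (d : ℝ) - e := by
        push_cast [Nat.cast_sub hde.le]; ring
      have hK : d - e ≤ K := by
        have h1 := (hν c).2
        have h0 := (hν c').1
        have : ((d - e : ℕ) : ℝ) ≤ (K : ℝ) := by rw [hcast]; linarith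
        exact_mod_cast this
      have hcon := heq (.diff c c' .ge (d - e)) hK
      simp only [ClockConstraint.sat, ClockRel.holds] at hcon
      rw [hcast] at hcon
      have := hcon.mp (by linarith)
      linarith

/-- On a clock region, the pointwise minimum and maximum of
finitely many simple functions `f₁, …, f_m` (`m ≥ 1`) agree, on the whole
region, with one of the given simple functions. -/
theorem simple_functions_min_max_on_region {𝒞 : Type} [Fintype 𝒞]
    [Nonempty 𝒞] (K : ℕ) (ζ : Set (𝒞 → ℝ)) (hζ : IsBoundedRegion K ζ)
    (m : ℕ) (hm : 1 ≤ m) (f : Fin m → ((𝒞 → ℝ) → ℝ))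
    (hf : ∀ i : Fin m, IsSimpleFun (f i)) :
    ∃ j j' : Fin m, ∀ ν ∈ ζ,
      f j ν = sInf (Set.range fun i : Fin m => f i ν) ∧
      f j' ν = sSup (Set.range fun i : Fin m => f i ν) := by
  obtain ⟨ν₀, hb, rfl⟩ := hζ
  haveI : Nonempty (Fin m) := ⟨⟨0, hm⟩⟩
  obtain ⟨j, hj⟩ := Finite.exists_min (fun i : Fin m => f i ν₀)
  obtain ⟨j', hj'⟩ := Finite.exists_max (fun i : Fin m => f i ν₀)
  refine ⟨j, j', ?_⟩
  rintro ν ⟨hνb, hνe⟩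
  constructor
  · have hleast : IsLeast (Set.range fun i : Fin m => f i ν) (f j ν) := by
      refine ⟨⟨j, rfl⟩, ?_⟩
      rintro _ ⟨i, rfl⟩
      exact simple_le_transfer K hb hνb hνe (hf j) (hf i) (hj i)
    exact (hleast.csInf_eq).symm
  · have hgr : IsGreatest (Set.range fun i : Fin m => f i ν) (f j' ν) := by
      refine ⟨⟨j', rfl⟩, ?_⟩
      rintro _ ⟨i, rfl⟩
      exact simple_le_transfer K hb hνb hνe (hf i) (hf j') (hj' i)
    exact (hgr.csSup_eq).symm
end

section
/- Let Γ be a finite game arena and χ a positional Max strategy. Let Γ_χ denote the game arena obtained from Γ by restricting, at each s ∈ S_Max, the available actions to the single action χ(s). Suppose (G, B) ⊨ Opt(Γ_χ), and suppose χ is locally optimal with respect to (G, B): for every s ∈ S_Max and every a ∈ A(s), either G(T(s, a)) < G(T(s, χ(s))), or G(T(s, a)) = G(T(s, χ(s))) and π(s, a) − G(s) + B(T(s, a)) ≤ π(s, χ(s)) − G(s) + B(T(s, χ(s))). Then (G, B) ⊨ Opt(Γ). -/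
open Filter
open scoped Classical

/-- A (turn-based, possibly infinite) game arena: states are partitioned into
Min-states (`isMin s`) and Max-states (`¬ isMin s`); `avail s` is the nonempty
set of actions available at `s`; `tr` and `price` are the transition and price
functions (their values only matter on available actions). -/
structure GameArena (S A : Type) where
  isMin : S → Prop
  avail : S → Set A
  avail_nonempty : ∀ s, (avail s).Nonempty
  tr : S → A → S
  price : S → A → ℝ

namespace GameArena

variable {S A : Type}

/-- A finite play: the initial state together with the list of (action, state)
steps taken so far, most recent step first. -/
abbrev FinPlay (S A : Type) := S × List (A × S)

/-- The last state of a finite play. -/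
def last (ρ : FinPlay S A) : S :=
  match ρ.2 with
  | [] => ρ.1
  | (_, s) :: _ => s

/-- A strategy of player Min: on every finite play ending in a Min state it
chooses an available action. -/
def IsMinStrategy (Γ : GameArena S A) (μ : FinPlay S A → A) : Prop :=
  ∀ ρ : FinPlay S A, Γ.isMin (last ρ) → μ ρ ∈ Γ.avail (last ρ)

/-- A strategy of player Max: on every finite play ending in a Max state it
chooses an available action. -/
def IsMaxStrategy (Γ : GameArena S A) (χ : FinPlay S A → A) : Prop :=
  ∀ ρ : FinPlay S A, ¬ Γ.isMin (last ρ) → χ ρ ∈ Γ.avail (last ρ)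

/-- A strategy is positional if its choice depends only on the last state. -/
def Positional (σ : FinPlay S A → A) : Prop :=
  ∀ ρ ρ' : FinPlay S A, last ρ = last ρ' → σ ρ = σ ρ'

/-- The finite prefixes of the unique play from `s` in which Min plays `μ`
and Max plays `χ`. -/
noncomputable def hist (Γ : GameArena S A) (μ χ : FinPlay S A → A) (s : S) :
    ℕ → FinPlay S A
  | 0 => (s, [])
  | n + 1 =>
      let ρ := Γ.hist μ χ s n
      let a := if Γ.isMin (last ρ) then μ ρ else χ ρ
      (ρ.1, (a, Γ.tr (last ρ) a) :: ρ.2)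

/-- The `n`-th state of the run `Run(s, μ, χ)`. -/
noncomputable def runState (Γ : GameArena S A) (μ χ : FinPlay S A → A) (s : S)
    (n : ℕ) : S :=
  last (Γ.hist μ χ s n)

/-- The action taken from the `n`-th state of the run `Run(s, μ, χ)`. -/
noncomputable def runAct (Γ : GameArena S A) (μ χ : FinPlay S A → A) (s : S)
    (n : ℕ) : A :=
  if Γ.isMin (last (Γ.hist μ χ s n)) then μ (Γ.hist μ χ s n)
  else χ (Γ.hist μ χ s n)

/-- Cesàro average of the first `n` prices along the run `Run(s, μ, χ)`. -/
noncomputable def avg (Γ : GameArena S A) (μ χ : FinPlay S A → A) (s : S)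
    (n : ℕ) : ℝ :=
  (∑ i ∈ Finset.range n, Γ.price (Γ.runState μ χ s i) (Γ.runAct μ χ s i)) / n

/-- `A_Min(Run(s, μ, χ))`: the limsup of the Cesàro averages of prices. -/
noncomputable def AMin (Γ : GameArena S A) (μ χ : FinPlay S A → A) (s : S) :
    EReal :=
  Filter.limsup (fun n => ((Γ.avg μ χ s n : ℝ) : EReal)) atTop

/-- `A_Max(Run(s, μ, χ))`: the liminf of the Cesàro averages of prices. -/
noncomputable def AMax (Γ : GameArena S A) (μ χ : FinPlay S A → A) (s : S) :
    EReal :=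
  Filter.liminf (fun n => ((Γ.avg μ χ s n : ℝ) : EReal)) atTop

/-- The upper value `Val*` of the mean-payoff game. -/
noncomputable def upperVal (Γ : GameArena S A) (s : S) : EReal :=
  ⨅ μ : {μ // Γ.IsMinStrategy μ}, ⨆ χ : {χ // Γ.IsMaxStrategy χ},
    Γ.AMin μ.1 χ.1 s

/-- The lower value `Val_*` of the mean-payoff game. -/
noncomputable def lowerVal (Γ : GameArena S A) (s : S) : EReal :=
  ⨆ χ : {χ // Γ.IsMaxStrategy χ}, ⨅ μ : {μ // Γ.IsMinStrategy μ},
    Γ.AMax μ.1 χ.1 s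

/-- `(G, B) ⊨ Opt(Γ)`: gain and bias optimality equations, together with the
nonemptiness of the sets of gain-preserving actions. -/
def SatOpt (Γ : GameArena S A) (G B : S → ℝ) : Prop :=
  ∀ s : S,
    (Γ.isMin s →
      G s = sInf {x | ∃ a ∈ Γ.avail s, x = G (Γ.tr s a)} ∧
      {a | a ∈ Γ.avail s ∧ G (Γ.tr s a) = G s}.Nonempty ∧
      B s = sInf {x | ∃ a ∈ Γ.avail s, G (Γ.tr s a) = G s ∧
              x = Γ.price s a - G s + B (Γ.tr s a)}) ∧
    (¬ Γ.isMin s →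
      G s = sSup {x | ∃ a ∈ Γ.avail s, x = G (Γ.tr s a)} ∧
      {a | a ∈ Γ.avail s ∧ G (Γ.tr s a) = G s}.Nonempty ∧
      B s = sSup {x | ∃ a ∈ Γ.avail s, G (Γ.tr s a) = G s ∧
              x = Γ.price s a - G s + B (Γ.tr s a)})

end GameArena

/-- The arena `Γ_χ` obtained from `Γ` by restricting, at every Max state, the
available actions to the single action chosen by the positional Max strategy
`χ`. -/
def GameArena.restrictMax {S A : Type} (Γ : GameArena S A) (χ : S → A) :
    GameArena S A where
  isMin := Γ.isMin
  avail := fun s => if Γ.isMin s then Γ.avail s else {χ s}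
  avail_nonempty := by
    intro s
    by_cases h : Γ.isMin s
    · simpa [h] using Γ.avail_nonempty s
    · simp [h]
  tr := Γ.tr
  price := Γ.price

/-- Let `Γ` be a finite game arena and `χ` a positional Max
strategy.  If `(G, B) ⊨ Opt(Γ_χ)` and `χ` is locally optimal with respect to
`(G, B)`, then `(G, B) ⊨ Opt(Γ)`. -/
theorem satOpt_of_locally_optimal {S A : Type} [Finite S] [Finite A]
    (Γ : GameArena S A) (χ : S → A)
    (hχ : ∀ s : S, ¬ Γ.isMin s → χ s ∈ Γ.avail s)
    (G B : S → ℝ) (hOpt : (Γ.restrictMax χ).SatOpt G B)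
    (hloc : ∀ s : S, ¬ Γ.isMin s → ∀ a ∈ Γ.avail s,
      G (Γ.tr s a) < G (Γ.tr s (χ s)) ∨
      (G (Γ.tr s a) = G (Γ.tr s (χ s)) ∧
        Γ.price s a - G s + B (Γ.tr s a) ≤
          Γ.price s (χ s) - G s + B (Γ.tr s (χ s)))) :
    Γ.SatOpt G B := by
  intro s
  constructor
  · intro h
    have h1 := (hOpt s).1 h
    simpa [GameArena.restrictMax, h] using h1
  · intro h
    have h2 := (hOpt s).2 h
    have hset1 : {x | ∃ a ∈ (Γ.restrictMax χ).avail s,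
        x = G ((Γ.restrictMax χ).tr s a)} = {G (Γ.tr s (χ s))} := by
      ext x; simp [GameArena.restrictMax, h, eq_comm]
    have hG : G s = G (Γ.tr s (χ s)) := by
      have := h2.1
      rw [hset1, csSup_singleton] at this
      exact this
    have hset2 : {x | ∃ a ∈ (Γ.restrictMax χ).avail s,
        G ((Γ.restrictMax χ).tr s a) = G s ∧
        x = (Γ.restrictMax χ).price s a - G s + B ((Γ.restrictMax χ).tr s a)}
        = {Γ.price s (χ s) - G s + B (Γ.tr s (χ s))} := by
      ext x; simp [GameArena.restrictMax, h, hG.symm, eq_comm]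
    have hB : B s = Γ.price s (χ s) - G s + B (Γ.tr s (χ s)) := by
      have := h2.2.2
      rw [hset2, csSup_singleton] at this
      exact this
    have hbound : ∀ x ∈ {x | ∃ a ∈ Γ.avail s, x = G (Γ.tr s a)}, x ≤ G s := by
      rintro x ⟨a, ha, rfl⟩
      rcases hloc s h a ha with h' | h'
      · rw [hG]; exact h'.le
      · rw [hG]; exact h'.1.le
    refine ⟨?_, ⟨χ s, hχ s h, hG.symm⟩, ?_⟩
    · refine le_antisymm ?_ (csSup_le ⟨G (Γ.tr s (χ s)), χ s, hχ s h, rfl⟩ hbound)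
      exact le_csSup ⟨G s, hbound⟩ ⟨χ s, hχ s h, hG⟩
    · have hbound2 : ∀ x ∈ {x | ∃ a ∈ Γ.avail s, G (Γ.tr s a) = G s ∧
          x = Γ.price s a - G s + B (Γ.tr s a)}, x ≤ B s := by
        rintro x ⟨a, ha, hGa, rfl⟩
        rcases hloc s h a ha with h' | h'
        · exact absurd (hGa.trans hG) (ne_of_lt h')
        · rw [hB]; exact h'.2
      refine le_antisymm ?_ ?_
      · exact le_csSup ⟨B s, hbound2⟩ ⟨χ s, hχ s h, hG.symm, hB⟩
      · exact csSup_le ⟨Γ.price s (χ s) - G s + B (Γ.tr s (χ s)),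
          χ s, hχ s h, hG.symm, rfl⟩ hbound2
end

section
/- Every finite game arena Γ admits a solution of the optimality equations: there exist functions G, B : S → ℝ such that (G, B) ⊨ Opt(Γ). -/
open Filter
open scoped Classical

/-!
Vanishing discount. For `0 ≤ x < 1` the Shapley operator `V ↦ best (price + x • V ∘ tr)` is
an `x`-contraction of `S → ℝ`, so the `x`-discounted game has a value `V_x` and both players have
optimal positional strategies. There are finitely many positional profiles, so a single profile
`σ` is optimal along a sequence `x_n → 1`. Under `σ` every state runs into a cycle, so
`(1 - x ^ p) * V_x s` is a polynomial in `x`; hence `V_x s = G s / (1 - x) + B s + o(1)`, the bias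
`B s` being a derivative at `1`. Scaling the optimality inequalities for `V_{x_n}` by `1 - x_n`,
resp. subtracting `G s / (1 - x_n)`, and letting `n → ∞` yields the gain, resp. bias, equations,
with the optimum attained at `σ s`.
-/

open Finset Topology

theorem exists_strictMono_forall_eq {α : Type*} [Finite α] (f : ℕ → α) :
    ∃ (a : α) (φ : ℕ → ℕ), StrictMono φ ∧ ∀ n, f (φ n) = a := by
  obtain ⟨a, ha⟩ := Finite.exists_infinite_fiber f
  obtain ⟨φ, hφ, hfφ⟩ := extraction_of_frequently_atTop
    (Nat.frequently_atTop_iff_infinite.2 (Set.infinite_coe_iff.1 ha))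
  exact ⟨a, φ, hφ, hfφ⟩

theorem Function.exists_isPeriodicPt_iterate {α : Type*} [Finite α] (f : α → α) (x : α) :
    ∃ N p, 0 < p ∧ IsPeriodicPt f p (f^[N] x) := by
  obtain ⟨i, j, hij, he⟩ := Finite.exists_ne_map_eq_of_infinite fun n => f^[n] x
  wlog hlt : i < j generalizing i j
  · exact this j i hij.symm he.symm (by omega)
  refine ⟨i, j - i, by omega, ?_⟩
  rw [IsPeriodicPt, IsFixedPt, ← iterate_add_apply,
    Nat.sub_add_cancel hlt.le, he]

theorem Set.Finite.csInf_image_le_csInf_image_add {α : Type*} {s : Set α} (hs : s.Finite)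
    (hne : s.Nonempty) {f g : α → ℝ} {δ : ℝ} (h : ∀ a ∈ s, f a ≤ g a + δ) :
    sInf (f '' s) ≤ sInf (g '' s) + δ := by
  obtain ⟨a, ha, hga⟩ := (hne.image g).csInf_mem (hs.image g)
  rw [← hga]
  exact (csInf_le (hs.image f).bddBelow (Set.mem_image_of_mem f ha)).trans (h a ha)

theorem Set.Finite.csSup_image_le_csSup_image_add {α : Type*} {s : Set α} (hs : s.Finite)
    (hne : s.Nonempty) {f g : α → ℝ} {δ : ℝ} (h : ∀ a ∈ s, f a ≤ g a + δ) :
    sSup (f '' s) ≤ sSup (g '' s) + δ := by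
  obtain ⟨a, ha, hfa⟩ := (hne.image f).csSup_mem (hs.image f)
  rw [← hfa]
  exact (h a ha).trans
    (by gcongr; exact le_csSup (hs.image g).bddAbove (Set.mem_image_of_mem g ha))

section DiscountToOne

variable {ι : Type*} {F : Filter ι} {x v : ι → ℝ}

theorem tendsto_sub_div_one_sub_of_mul_eq {T D : ℝ → ℝ} (hx : Tendsto x F (𝓝[≠] 1))
    (hT : DifferentiableAt ℝ T 1) (hD : DifferentiableAt ℝ D 1) (hD1 : D 1 ≠ 0)
    (hv : ∀ i, D (x i) * (1 - x i) * v i = T (x i)) :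
    Tendsto (fun i => v i - T 1 / D 1 / (1 - x i)) F
      (𝓝 (-deriv (fun y => T y - T 1 / D 1 * D y) 1 / D 1)) := by
  set E := fun y => T y - T 1 / D 1 * D y
  have hE1 : E 1 = 0 := by simp [E, div_mul_cancel₀ _ hD1]
  have hslope : Tendsto (slope E 1) (𝓝[≠] 1) (𝓝 (deriv E 1)) :=
    hasDerivAt_iff_tendsto_slope.1 (hT.sub (hD.const_mul _)).hasDerivAt
  have hDx : Tendsto (fun i => D (x i)) F (𝓝 (D 1)) :=
    hD.continuousAt.tendsto.comp (hx.mono_right nhdsWithin_le_nhds)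
  refine ((hslope.comp hx).neg.div hDx hD1).congr' ?_
  -- `v i - g / (1 - x i) = -slope E 1 (x i) / D (x i)` with `g = T 1 / D 1`, since `E 1 = 0`
  filter_upwards [hx self_mem_nhdsWithin, hDx.eventually_ne hD1] with i hxi hDi
  have hxi : x i - 1 ≠ 0 := sub_ne_zero.2 hxi
  have hxi' : 1 - x i ≠ 0 := by rwa [← neg_sub, neg_ne_zero] at hxi
  simp only [Pi.div_apply, Function.comp_apply, slope_def_field, hE1, E]
  rw [← hv i]
  field_simp
  ring

theorem tendsto_one_sub_mul_of_tendsto_sub_div {g b : ℝ} (hx : Tendsto x F (𝓝[≠] 1))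
    (h : Tendsto (fun i => v i - g / (1 - x i)) F (𝓝 b)) :
    Tendsto (fun i => (1 - x i) * v i) F (𝓝 g) := by
  have hx' := hx.mono_right nhdsWithin_le_nhds
  have hlim := (((tendsto_const_nhds (x := (1 : ℝ))).sub hx').mul h).add
    (tendsto_const_nhds (x := g))
  rw [sub_self, zero_mul, zero_add] at hlim
  refine hlim.congr' ?_
  filter_upwards [hx self_mem_nhdsWithin] with i hi
  have : 1 - x i ≠ 0 := sub_ne_zero.2 (Ne.symm hi)
  field_simp
  ring

theorem le_of_tendsto_one_sub_mul [F.NeBot] {v w : ι → ℝ} {g g' : ℝ}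
    (hx : Tendsto x F (𝓝[<] 1)) (hv : Tendsto (fun i => (1 - x i) * v i) F (𝓝 g))
    (hw : Tendsto (fun i => (1 - x i) * w i) F (𝓝 g')) (h : ∀ i, v i ≤ w i) : g ≤ g' := by
  refine le_of_tendsto_of_tendsto hv hw ?_
  filter_upwards [hx self_mem_nhdsWithin] with i hi
  exact mul_le_mul_of_nonneg_left (h i) (sub_nonneg.2 (le_of_lt hi))

end DiscountToOne

section Orbit

variable {S : Type} {f : S → S} {c V : S → ℝ} {x : ℝ}

theorem eq_sum_add_pow_mul_iterate (hV : ∀ t, V t = c t + x * V (f t)) (n : ℕ) (t : S) :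
    V t = ∑ i ∈ range n, x ^ i * c (f^[i] t) + x ^ n * V (f^[n] t) := by
  induction n with
  | zero => simp
  | succ n ih =>
    rw [ih, hV (f^[n] t), sum_range_succ, Function.iterate_succ_apply']
    ring

theorem one_sub_pow_mul_eq_of_isPeriodicPt (hV : ∀ t, V t = c t + x * V (f t)) {t : S}
    {N p : ℕ} (hp : Function.IsPeriodicPt f p (f^[N] t)) :
    (1 - x ^ p) * V t = (1 - x ^ p) * ∑ i ∈ range N, x ^ i * c (f^[i] t) +
      x ^ N * ∑ i ∈ range p, x ^ i * c (f^[i] (f^[N] t)) := by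
  have hpre := eq_sum_add_pow_mul_iterate hV N t
  have hcyc := eq_sum_add_pow_mul_iterate hV p (f^[N] t)
  rw [hp.eq] at hcyc
  linear_combination (1 - x ^ p) * hpre + x ^ N * hcyc

variable [Finite S]

theorem exists_tendsto_sub_div_one_sub (f : S → S) (c : S → ℝ) (s : S) :
    ∃ g b : ℝ, ∀ {ι : Type} {F : Filter ι} {x : ι → ℝ} {V : ι → S → ℝ},
      Tendsto x F (𝓝[≠] 1) → (∀ i t, V i t = c t + x i * V i (f t)) →
      Tendsto (fun i => V i s - g / (1 - x i)) F (𝓝 b) := by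
  obtain ⟨N, p, hp, hper⟩ := Function.exists_isPeriodicPt_iterate f s
  set D : ℝ → ℝ := fun y => ∑ i ∈ range p, y ^ i
  set T : ℝ → ℝ := fun y => (1 - y ^ p) * ∑ i ∈ range N, y ^ i * c (f^[i] s) +
    y ^ N * ∑ i ∈ range p, y ^ i * c (f^[i] (f^[N] s))
  have hD1 : D 1 ≠ 0 := by simp [D, hp.ne']
  refine ⟨T 1 / D 1, _, fun hx hV => tendsto_sub_div_one_sub_of_mul_eq hx (by fun_prop)
    (by fun_prop) hD1 fun i => ?_⟩
  rw [geom_sum_mul_neg]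
  exact one_sub_pow_mul_eq_of_isPeriodicPt (hV i) hper

end Orbit

namespace GameArena

section Discounted

variable {S A : Type} (Γ : GameArena S A)

def actionValue (x : ℝ) (V : S → ℝ) (s : S) (a : A) : ℝ :=
  Γ.price s a + x * V (Γ.tr s a)

noncomputable def best (s : S) (u : A → ℝ) : ℝ :=
  if Γ.isMin s then sInf (u '' Γ.avail s) else sSup (u '' Γ.avail s)

noncomputable def shapleyOp (x : ℝ) (V : S → ℝ) : S → ℝ :=
  fun s => Γ.best s (Γ.actionValue x V s)

/-- `V` is the value of the `x`-discounted game and `σ` an optimal positional profile. -/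
structure IsDiscountedSolution (x : ℝ) (V : S → ℝ) (σ : S → A) : Prop where
  mem_avail : ∀ s, σ s ∈ Γ.avail s
  eq_actionValue : ∀ s, V s = Γ.actionValue x V s (σ s)
  le_actionValue : ∀ s, Γ.isMin s → ∀ a ∈ Γ.avail s, V s ≤ Γ.actionValue x V s a
  actionValue_le : ∀ s, ¬ Γ.isMin s → ∀ a ∈ Γ.avail s, Γ.actionValue x V s a ≤ V s

variable {Γ} [Finite A] {s : S} {u w : A → ℝ}

theorem best_le (hs : Γ.isMin s) {a : A} (ha : a ∈ Γ.avail s) : Γ.best s u ≤ u a := by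
  rw [best, if_pos hs]
  exact csInf_le ((Γ.avail s).toFinite.image u).bddBelow (Set.mem_image_of_mem u ha)

theorem le_best (hs : ¬ Γ.isMin s) {a : A} (ha : a ∈ Γ.avail s) : u a ≤ Γ.best s u := by
  rw [best, if_neg hs]
  exact le_csSup ((Γ.avail s).toFinite.image u).bddAbove (Set.mem_image_of_mem u ha)

theorem exists_eq_best (s : S) (u : A → ℝ) : ∃ a ∈ Γ.avail s, u a = Γ.best s u := by
  have hne := (Γ.avail_nonempty s).image u
  have hfin := (Γ.avail s).toFinite.image u
  rw [best]
  split_ifs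
  exacts [hne.csInf_mem hfin, hne.csSup_mem hfin]

theorem abs_best_sub_best_le {δ : ℝ} (h : ∀ a ∈ Γ.avail s, |u a - w a| ≤ δ) :
    |Γ.best s u - Γ.best s w| ≤ δ := by
  have huw : ∀ a ∈ Γ.avail s, u a ≤ w a + δ := fun a ha => by
    linarith [(abs_sub_le_iff.1 (h a ha)).1]
  have hwu : ∀ a ∈ Γ.avail s, w a ≤ u a + δ := fun a ha => by
    linarith [(abs_sub_le_iff.1 (h a ha)).2]
  have hfin := (Γ.avail s).toFinite
  have hne := Γ.avail_nonempty s
  rw [abs_sub_le_iff, best, best]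
  split_ifs
  · constructor
    · linarith [hfin.csInf_image_le_csInf_image_add hne huw]
    · linarith [hfin.csInf_image_le_csInf_image_add hne hwu]
  · constructor
    · linarith [hfin.csSup_image_le_csSup_image_add hne huw]
    · linarith [hfin.csSup_image_le_csSup_image_add hne hwu]

variable [Fintype S] {x : ℝ}

theorem lipschitzWith_shapleyOp (hx : 0 ≤ x) :
    LipschitzWith ⟨x, hx⟩ (Γ.shapleyOp x) := by
  refine LipschitzWith.of_dist_le_mul fun V W => (dist_pi_le_iff (by positivity)).2 fun s => ?_
  refine abs_best_sub_best_le fun a _ => ?_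
  simp only [actionValue, add_sub_add_left_eq_sub, ← mul_sub, abs_mul, abs_of_nonneg hx]
  exact mul_le_mul_of_nonneg_left (dist_le_pi_dist V W _) hx

theorem exists_isDiscountedSolution (hx0 : 0 ≤ x) (hx1 : x < 1) :
    ∃ V σ, Γ.IsDiscountedSolution x V σ := by
  have hc : ContractingWith ⟨x, hx0⟩ (Γ.shapleyOp x) := ⟨hx1, lipschitzWith_shapleyOp hx0⟩
  set V := hc.fixedPoint
  have hV : ∀ s, Γ.best s (Γ.actionValue x V s) = V s :=
    congr_fun hc.fixedPoint_isFixedPt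
  choose σ hσ hσV using fun s => exists_eq_best s (Γ.actionValue x V s)
  refine ⟨V, σ, hσ, fun s => (hσV s).trans (hV s) |>.symm, fun s hs a ha => ?_,
    fun s hs a ha => ?_⟩
  · exact hV s ▸ best_le hs ha
  · exact hV s ▸ le_best hs ha

end Discounted

section VanishingDiscount

variable {S A : Type} {Γ : GameArena S A} {ι : Type*} {F : Filter ι} {x : ι → ℝ}
  {V : ι → S → ℝ} {G B : S → ℝ}

theorem tendsto_one_sub_mul_actionValue (hx : Tendsto x F (𝓝[<] 1))
    (hB : ∀ s, Tendsto (fun i => V i s - G s / (1 - x i)) F (𝓝 (B s))) (s : S) (a : A) :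
    Tendsto (fun i => (1 - x i) * Γ.actionValue (x i) (V i) s a) F (𝓝 (G (Γ.tr s a))) := by
  have hx' := hx.mono_right nhdsWithin_le_nhds
  have hG := tendsto_one_sub_mul_of_tendsto_sub_div
    (hx.mono_right (nhdsLT_le_nhdsNE 1)) (hB (Γ.tr s a))
  have hlim := (((tendsto_const_nhds (x := (1 : ℝ))).sub hx').mul_const (Γ.price s a)).add
    (hx'.mul hG)
  rw [sub_self, zero_mul, zero_add, one_mul] at hlim
  exact hlim.congr fun i => by simp only [actionValue]; ring

theorem tendsto_actionValue_sub_div (hx : Tendsto x F (𝓝[<] 1))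
    (hB : ∀ s, Tendsto (fun i => V i s - G s / (1 - x i)) F (𝓝 (B s))) {s : S} {a : A}
    (hGa : G (Γ.tr s a) = G s) :
    Tendsto (fun i => Γ.actionValue (x i) (V i) s a - G s / (1 - x i)) F
      (𝓝 (Γ.price s a - G s + B (Γ.tr s a))) := by
  have hlim := (tendsto_const_nhds (x := Γ.price s a - G s)).add
    ((hx.mono_right nhdsWithin_le_nhds).mul (hB (Γ.tr s a)))
  rw [one_mul] at hlim
  refine hlim.congr' ?_
  filter_upwards [hx self_mem_nhdsWithin] with i hi
  have : 1 - x i ≠ 0 := sub_ne_zero.2 (ne_of_gt hi)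
  simp only [actionValue, hGa]
  field_simp
  ring

theorem satOpt_of_tendsto [F.NeBot] {σ : S → A} (hx : Tendsto x F (𝓝[<] 1))
    (hV : ∀ i, Γ.IsDiscountedSolution (x i) (V i) σ)
    (hB : ∀ s, Tendsto (fun i => V i s - G s / (1 - x i)) F (𝓝 (B s))) :
    Γ.SatOpt G B := by
  obtain ⟨i₀⟩ := F.nonempty_of_neBot
  have hGV : ∀ s, Tendsto (fun i => (1 - x i) * V i s) F (𝓝 (G s)) := fun s =>
    tendsto_one_sub_mul_of_tendsto_sub_div (hx.mono_right (nhdsLT_le_nhdsNE 1)) (hB s)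
  intro s
  have hσ := (hV i₀).mem_avail s
  have hGσ : G (Γ.tr s (σ s)) = G s :=
    tendsto_nhds_unique (tendsto_one_sub_mul_actionValue hx hB s (σ s))
      ((hGV s).congr fun i => by rw [(hV i).eq_actionValue s])
  have hBσ : B s = Γ.price s (σ s) - G s + B (Γ.tr s (σ s)) :=
    tendsto_nhds_unique (hB s)
      ((tendsto_actionValue_sub_div hx hB hGσ).congr fun i => by
        rw [← (hV i).eq_actionValue s])
  refine ⟨fun hs => ⟨?_, ⟨σ s, hσ, hGσ⟩, ?_⟩, fun hs => ⟨?_, ⟨σ s, hσ, hGσ⟩, ?_⟩⟩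
  · refine (IsLeast.csInf_eq ?_).symm
    refine ⟨⟨σ s, hσ, hGσ.symm⟩, ?_⟩
    rintro _ ⟨a, ha, rfl⟩
    exact le_of_tendsto_one_sub_mul hx (hGV s) (tendsto_one_sub_mul_actionValue hx hB s a)
      fun i => (hV i).le_actionValue s hs a ha
  · refine (IsLeast.csInf_eq ?_).symm
    refine ⟨⟨σ s, hσ, hGσ, hBσ⟩, ?_⟩
    rintro _ ⟨a, ha, hGa, rfl⟩
    exact le_of_tendsto_of_tendsto' (hB s) (tendsto_actionValue_sub_div hx hB hGa)
      fun i => sub_le_sub_right ((hV i).le_actionValue s hs a ha) _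
  · refine (IsGreatest.csSup_eq ?_).symm
    refine ⟨⟨σ s, hσ, hGσ.symm⟩, ?_⟩
    rintro _ ⟨a, ha, rfl⟩
    exact le_of_tendsto_one_sub_mul hx (tendsto_one_sub_mul_actionValue hx hB s a) (hGV s)
      fun i => (hV i).actionValue_le s hs a ha
  · refine (IsGreatest.csSup_eq ?_).symm
    refine ⟨⟨σ s, hσ, hGσ, hBσ⟩, ?_⟩
    rintro _ ⟨a, ha, hGa, rfl⟩
    exact le_of_tendsto_of_tendsto' (tendsto_actionValue_sub_div hx hB hGa) (hB s)
      fun i => sub_le_sub_right ((hV i).actionValue_le s hs a ha) _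

end VanishingDiscount

end GameArena

/-- Every finite game arena admits a solution of the
gain–bias optimality equations. -/
theorem exists_satOpt_of_finite {S A : Type} [Finite S] [Finite A]
    (Γ : GameArena S A) :
    ∃ G B : S → ℝ, Γ.SatOpt G B := by
  have := Fintype.ofFinite S
  obtain ⟨x, -, hx01, hx1⟩ := exists_seq_strictMono_tendsto' (zero_lt_one' ℝ)
  choose V σ hVσ using fun n => Γ.exists_isDiscountedSolution (hx01 n).1.le (hx01 n).2
  obtain ⟨σ₀, φ, hφ, hσφ⟩ := exists_strictMono_forall_eq σ
  choose G B hGB using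
    exists_tendsto_sub_div_one_sub (fun s => Γ.tr s (σ₀ s)) (fun s => Γ.price s (σ₀ s))
  have hxφ : Tendsto (x ∘ φ) atTop (𝓝[<] 1) := tendsto_nhdsWithin_iff.2
    ⟨hx1.comp hφ.tendsto_atTop, Eventually.of_forall fun n => (hx01 (φ n)).2⟩
  have hVφ : ∀ n, Γ.IsDiscountedSolution (x (φ n)) (V (φ n)) σ₀ := fun n => hσφ n ▸ hVσ (φ n)
  exact ⟨G, B, GameArena.satOpt_of_tendsto hxφ hVφ fun s =>
    hGB s (hxφ.mono_right (nhdsLT_le_nhdsNE 1)) fun n => (hVφ n).eq_actionValue⟩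
end

section
/- Mean-payoff games on finite game arenas are positionally determined: for every finite game arena Γ and every state s, Val*(s) = Val_*(s) =: Val(s), and there exist a positional Min strategy μ* and a positional Max strategy χ* such that for every state s, sup over Max strategies χ of A_Min(Run(s, μ*, χ)) = Val(s) and inf over Min strategies μ of A_Max(Run(s, μ, χ*)) = Val(s). -/
open Filter
open scoped Classical

/-!
For a discount factor `x < 1` the Bellman operator of the discounted game is an `x`-contraction,
and a positional profile attaining the optimum at its fixed point is optimal for both players.
There are finitely many positional profiles, so one of them, `σ`, is optimal for discount factors
arbitrarily close to `1`. The prices along the play following `σ` are eventually periodic, hence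
its discounted payoff expands as `G s / (1 - x) + B s + o(1)` when `x → 1⁻`, and in the limit the
discounted optimality inequalities become the gain and bias optimality inequalities for `(G, B)`.
Along a play in which Min follows `σ`, the gain `G` never increases; since it takes finitely many
values it eventually stabilises, after which the prices telescope against the bias `B`, so the
mean payoff is at most `G s`. Symmetrically Max secures `G s` by following `σ`; so `G` is the value
and `σ` is optimal for both players.
-/

open Topology Finset

theorem tendsto_one_sub_nhdsLT_one : Tendsto (fun x : ℝ => 1 - x) (𝓝[<] 1) (𝓝 0) := by
  rw [← sub_self (1 : ℝ)]
  exact tendsto_nhdsWithin_of_tendsto_nhds (tendsto_const_nhds.sub tendsto_id)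

def HasLaurentExpansion (W : ℝ → ℝ) (g b : ℝ) : Prop :=
  Tendsto (fun x => W x - g / (1 - x)) (𝓝[<] 1) (𝓝 b)

section LaurentExpansion

variable {W W₁ W₂ : ℝ → ℝ} {g b g₁ b₁ g₂ b₂ : ℝ}

theorem HasLaurentExpansion.neg (h : HasLaurentExpansion W g b) :
    HasLaurentExpansion (fun x => -W x) (-g) (-b) := by
  refine (Tendsto.neg h).congr fun x => ?_
  ring

theorem HasLaurentExpansion.tendsto_one_sub_mul (h : HasLaurentExpansion W g b) :
    Tendsto (fun x => (1 - x) * W x) (𝓝[<] 1) (𝓝 g) := by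
  have := (tendsto_one_sub_nhdsLT_one.mul h).add_const g
  rw [zero_mul, zero_add] at this
  refine this.congr' ?_
  filter_upwards [self_mem_nhdsWithin] with x (hx : x < 1)
  have : 1 - x ≠ 0 := sub_ne_zero.2 hx.ne'
  field_simp
  ring

theorem hasLaurentExpansion_of_differentiableAt {R : ℝ → ℝ} (hR : DifferentiableAt ℝ R 1)
    (hW : ∀ᶠ x in 𝓝[<] 1, (1 - x) * W x = R x) :
    HasLaurentExpansion W (R 1) (-deriv R 1) := by
  -- `W x - R 1 / (1 - x) = -slope R 1 x`
  refine (hR.hasDerivAt.tendsto_slope.mono_left (nhdsLT_le_nhdsNE 1)).neg.congr' ?_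
  filter_upwards [hW, self_mem_nhdsWithin] with x hx (hx1 : x < 1)
  have : x - 1 ≠ 0 := sub_ne_zero.2 hx1.ne
  have : 1 - x ≠ 0 := sub_ne_zero.2 hx1.ne'
  rw [slope_def_field, ← hx]
  field_simp
  ring

theorem HasLaurentExpansion.le_of_frequently_le (h₁ : HasLaurentExpansion W₁ g₁ b₁)
    (h₂ : HasLaurentExpansion W₂ g₂ b₂) {q : ℝ} (h : ∃ᶠ x in 𝓝[<] 1, W₁ x ≤ q + x * W₂ x) :
    g₁ ≤ g₂ ∧ (g₂ = g₁ → b₁ ≤ q - g₁ + b₂) := by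
  have hx : Tendsto (fun x : ℝ => x) (𝓝[<] 1) (𝓝 1) :=
    tendsto_nhdsWithin_of_tendsto_nhds tendsto_id
  have h' := h.and_eventually (self_mem_nhdsWithin (s := Set.Iio 1))
  constructor
  · have hlim := (tendsto_one_sub_nhdsLT_one.mul_const q).add (hx.mul h₂.tendsto_one_sub_mul)
    rw [zero_mul, zero_add, one_mul] at hlim
    refine le_of_tendsto_of_tendsto_of_frequently h₁.tendsto_one_sub_mul hlim ?_
    refine h'.mono fun x ⟨hle, (hx1 : x < 1)⟩ => ?_
    linear_combination mul_le_mul_of_nonneg_left hle (sub_nonneg.2 hx1.le)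
  · rintro rfl
    have hlim := ((hx.mul h₂).const_add q).sub_const g₂
    rw [one_mul, add_sub_right_comm] at hlim
    refine le_of_tendsto_of_tendsto_of_frequently h₁ hlim ?_
    refine h'.mono fun x ⟨hle, (hx1 : x < 1)⟩ => ?_
    have : 1 - x ≠ 0 := sub_ne_zero.2 hx1.ne'
    have e : x * (g₂ / (1 - x)) + g₂ = g₂ / (1 - x) := by field_simp; ring
    linear_combination hle + e

theorem HasLaurentExpansion.ge_of_frequently_ge (h₁ : HasLaurentExpansion W₁ g₁ b₁)
    (h₂ : HasLaurentExpansion W₂ g₂ b₂) {q : ℝ} (h : ∃ᶠ x in 𝓝[<] 1, q + x * W₂ x ≤ W₁ x) :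
    g₂ ≤ g₁ ∧ (g₂ = g₁ → q - g₁ + b₂ ≤ b₁) := by
  have := h₁.neg.le_of_frequently_le h₂.neg (q := -q) (h.mono fun x hx => by linarith)
  exact ⟨neg_le_neg_iff.1 this.1, fun e => by linarith [this.2 (by rw [e])]⟩

end LaurentExpansion

section PeriodicSeries

variable {ρ : ℕ → ℝ} {M x : ℝ}

theorem summable_pow_mul_of_abs_le (hρ : ∀ i, |ρ i| ≤ M) (hx₀ : 0 ≤ x) (hx₁ : x < 1) :
    Summable fun i => x ^ i * ρ i := by
  refine ((summable_geometric_of_lt_one hx₀ hx₁).mul_left M).of_norm_bounded fun i => ?_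
  rw [norm_mul, norm_pow, Real.norm_of_nonneg hx₀, Real.norm_eq_abs, mul_comm M]
  exact mul_le_mul_of_nonneg_left (hρ i) (pow_nonneg hx₀ i)

theorem one_sub_pow_mul_tsum_of_periodic {c : ℕ} (hρ : ∀ i, |ρ i| ≤ M)
    (hper : Function.Periodic ρ c) (hx₀ : 0 ≤ x) (hx₁ : x < 1) :
    (1 - x ^ c) * ∑' i, x ^ i * ρ i = ∑ i ∈ range c, x ^ i * ρ i := by
  have hshift : ∑' i, x ^ (i + c) * ρ (i + c) = x ^ c * ∑' i, x ^ i * ρ i := by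
    rw [← tsum_mul_left]
    exact tsum_congr fun i => by rw [hper, pow_add]; ring
  have := (summable_pow_mul_of_abs_le hρ hx₀ hx₁).sum_add_tsum_nat_add c
  rw [hshift] at this
  linear_combination -this

theorem exists_hasLaurentExpansion_of_periodic {p c : ℕ} (hc : 0 < c) (hρ : ∀ i, |ρ i| ≤ M)
    (hper : Function.Periodic (fun n => ρ (p + n)) c) :
    ∃ g b, HasLaurentExpansion (fun x => ∑' i, x ^ i * ρ i) g b := by
  set P : ℝ → ℝ := fun x => ∑ i ∈ range p, x ^ i * ρ i
  set Q : ℝ → ℝ := fun x => ∑ i ∈ range c, x ^ i * ρ (p + i)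
  set D : ℝ → ℝ := fun x => ∑ i ∈ range c, x ^ i
  have hD1 : D 1 ≠ 0 := by simp [D, hc.ne']
  -- `∑' x ^ i * ρ i = P x + x ^ p * Q x / (1 - x ^ c)` and `1 - x ^ c = (1 - x) * D x`
  refine ⟨_, _, hasLaurentExpansion_of_differentiableAt
    (R := fun x => (1 - x) * P x + x ^ p * Q x / D x) (by fun_prop (disch := exact hD1)) ?_⟩
  filter_upwards [Ioo_mem_nhdsLT one_pos] with x ⟨hx₀, hx₁⟩
  have hs := summable_pow_mul_of_abs_le hρ hx₀.le hx₁
  have htail : ∑' i, x ^ i * ρ i = P x + x ^ p * ∑' i, x ^ i * ρ (p + i) := by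
    rw [← hs.sum_add_tsum_nat_add p, ← tsum_mul_left]
    exact congrArg _ (tsum_congr fun i => by rw [add_comm i p, pow_add]; ring)
  have hperiod := one_sub_pow_mul_tsum_of_periodic (fun i => hρ (p + i)) hper hx₀.le hx₁
  have hgeom : (1 - x) * D x = 1 - x ^ c := by linear_combination -geom_sum_mul x c
  have hDpos : 0 < D x := sum_pos (fun i _ => pow_pos hx₀ i) (nonempty_range_iff.2 hc.ne')
  change _ = _ + x ^ p * (∑ i ∈ range c, x ^ i * ρ (p + i)) / D x
  rw [htail, ← hperiod, ← hgeom]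
  field_simp

end PeriodicSeries

theorem exists_periodic_iterate {α : Type*} [Finite α] (f : α → α) (a : α) :
    ∃ p c, 0 < c ∧ Function.Periodic (fun n => f^[p + n] a) c := by
  obtain ⟨i, j, hij, heq⟩ := Finite.exists_ne_map_eq_of_infinite fun n => f^[n] a
  wlog hlt : i < j generalizing i j
  · exact this j i hij.symm heq.symm (by omega)
  refine ⟨i, j - i, by omega, fun n => ?_⟩
  simp only
  rw [show i + (n + (j - i)) = n + j by omega, add_comm i n, Function.iterate_add_apply,
    Function.iterate_add_apply]
  exact congrArg _ heq.symm

theorem eq_zero_of_forall_eq_mul_comp {α : Type*} [Finite α] {u : α → ℝ} {f : α → α} {x : ℝ}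
    (hx : |x| < 1) (h : ∀ a, u a = x * u (f a)) : u = 0 := by
  funext a
  have : Nonempty α := ⟨a⟩
  obtain ⟨b, hb⟩ := Finite.exists_max fun a => |u a|
  have hcontr : |u b| ≤ |x| * |u b| :=
    calc |u b| = |x| * |u (f b)| := by rw [← abs_mul, ← h]
      _ ≤ |x| * |u b| := mul_le_mul_of_nonneg_left (hb _) (abs_nonneg x)
  have : |u b| ≤ 0 := by nlinarith [abs_nonneg (u b)]
  exact abs_nonpos_iff.1 ((hb a).trans this)

theorem ciInf_le_ciInf_add {ι : Type*} [Finite ι] [Nonempty ι] {f g : ι → ℝ} {c : ℝ}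
    (h : ∀ i, f i ≤ g i + c) : ⨅ i, f i ≤ (⨅ i, g i) + c := by
  obtain ⟨i, hi⟩ := exists_eq_ciInf_of_finite (f := g)
  exact (ciInf_le (Finite.bddBelow_range f) i).trans (hi ▸ h i)

theorem ciSup_le_ciSup_add {ι : Type*} [Finite ι] [Nonempty ι] {f g : ι → ℝ} {c : ℝ}
    (h : ∀ i, f i ≤ g i + c) : ⨆ i, f i ≤ (⨆ i, g i) + c := by
  obtain ⟨i, hi⟩ := exists_eq_ciSup_of_finite (f := f)
  exact hi ▸ (h i).trans (add_le_add_left (le_ciSup (Finite.bddAbove_range g) i) c)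

theorem Antitone.exists_forall_ge_eq_of_finite_range {α : Type*} [LinearOrder α] {g : ℕ → α}
    (hg : Antitone g) (hfin : (Set.range g).Finite) : ∃ N, ∀ n ≥ N, g n = g N := by
  obtain ⟨_, ⟨N, rfl⟩, hN⟩ := Set.exists_min_image (Set.range g) id hfin (Set.range_nonempty g)
  exact ⟨N, fun n hn => le_antisymm (hg hn) (hN _ ⟨n, rfl⟩)⟩

theorem exists_sum_range_le_of_le_add_sub {p b : ℕ → ℝ} {g M : ℝ} {N : ℕ}
    (hb : ∀ n, |b n| ≤ M) (h : ∀ n ≥ N, p n ≤ g + (b n - b (n + 1))) :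
    ∃ C, ∀ n ≥ N, ∑ i ∈ range n, p i ≤ n * g + C := by
  have telescope : ∀ n ≥ N,
      ∑ i ∈ range n, p i ≤ ∑ i ∈ range N, p i + (n - N) * g + b N - b n := by
    intro n hn
    induction n, hn using Nat.le_induction with
    | base => simp
    | succ n hn ih =>
      rw [sum_range_succ]
      push_cast
      linarith [h n hn]
  exact ⟨∑ i ∈ range N, p i - N * g + b N + M, fun n hn => by
    linarith [telescope n hn, (abs_le.1 (hb n)).1]⟩

theorem limsup_avg_le_of_sum_range_le {p : ℕ → ℝ} {g C : ℝ} {N : ℕ}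
    (h : ∀ n ≥ N, ∑ i ∈ range n, p i ≤ n * g + C) :
    limsup (fun n : ℕ => (((∑ i ∈ range n, p i) / n : ℝ) : EReal)) atTop ≤ g := by
  have hlim : Tendsto (fun n : ℕ => ((g + C / n : ℝ) : EReal)) atTop (𝓝 g) := by
    refine EReal.tendsto_coe.2 ?_
    simpa using tendsto_const_nhds.add
      (tendsto_const_nhds.div_atTop (tendsto_natCast_atTop_atTop (R := ℝ)))
  rw [← hlim.limsup_eq]
  refine limsup_le_limsup ?_
  filter_upwards [eventually_ge_atTop (max N 1)] with n hn
  have hn0 : (0 : ℝ) < n := by exact_mod_cast le_of_max_le_right hn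
  refine EReal.coe_le_coe_iff.2 ?_
  rw [div_le_iff₀ hn0, add_mul, div_mul_cancel₀ _ hn0.ne']
  linarith [h n (le_of_max_le_left hn)]

namespace GameArena

variable {S A : Type} (Γ : GameArena S A)

def next (σ : S → A) (s : S) : S := Γ.tr s (σ s)

noncomputable def discountedPayoff (σ : S → A) (x : ℝ) (s : S) : ℝ :=
  ∑' i, x ^ i * Γ.price ((Γ.next σ)^[i] s) (σ ((Γ.next σ)^[i] s))

noncomputable def bellman (x : ℝ) (v : S → ℝ) (s : S) : ℝ :=
  if Γ.isMin s then ⨅ a : Γ.avail s, Γ.price s a + x * v (Γ.tr s a)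
  else ⨆ a : Γ.avail s, Γ.price s a + x * v (Γ.tr s a)

structure IsDiscountOptimal (σ : S → A) (x : ℝ) : Prop where
  mem_avail : ∀ s, σ s ∈ Γ.avail s
  le_of_isMin : ∀ s, Γ.isMin s → ∀ a ∈ Γ.avail s,
    Γ.discountedPayoff σ x s ≤ Γ.price s a + x * Γ.discountedPayoff σ x (Γ.tr s a)
  ge_of_not_isMin : ∀ s, ¬ Γ.isMin s → ∀ a ∈ Γ.avail s,
    Γ.price s a + x * Γ.discountedPayoff σ x (Γ.tr s a) ≤ Γ.discountedPayoff σ x s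

def IsUpperStep (G B : S → ℝ) (s : S) (a : A) : Prop :=
  G (Γ.tr s a) ≤ G s ∧ (G (Γ.tr s a) = G s → Γ.price s a - G s + B (Γ.tr s a) ≤ B s)

def IsLowerStep (G B : S → ℝ) (s : S) (a : A) : Prop :=
  G s ≤ G (Γ.tr s a) ∧ (G (Γ.tr s a) = G s → B s ≤ Γ.price s a - G s + B (Γ.tr s a))

/-- An inequality form of the optimality equations `SatOpt Γ G B`, with `σ` attaining the
optima. -/
structure IsGainBiasPair (G B : S → ℝ) (σ : S → A) : Prop where
  mem_avail : ∀ s, σ s ∈ Γ.avail s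
  isUpperStep_self : ∀ s, Γ.IsUpperStep G B s (σ s)
  isLowerStep_self : ∀ s, Γ.IsLowerStep G B s (σ s)
  isLowerStep_of_isMin : ∀ s, Γ.isMin s → ∀ a ∈ Γ.avail s, Γ.IsLowerStep G B s a
  isUpperStep_of_not_isMin : ∀ s, ¬ Γ.isMin s → ∀ a ∈ Γ.avail s, Γ.IsUpperStep G B s a

def negPrice : GameArena S A := { Γ with price := fun s a => -Γ.price s a }

section Discounted

variable {Γ} [Finite A] {x : ℝ}

theorem bellman_le_add {v w : S → ℝ} {c : ℝ} (hx : 0 ≤ x) (h : ∀ s, v s ≤ w s + c) (s : S) :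
    Γ.bellman x v s ≤ Γ.bellman x w s + x * c := by
  have : Nonempty (Γ.avail s) := (Γ.avail_nonempty s).to_subtype
  have hstep : ∀ a : Γ.avail s,
      Γ.price s a + x * v (Γ.tr s a) ≤ Γ.price s a + x * w (Γ.tr s a) + x * c := fun a => by
    linear_combination mul_le_mul_of_nonneg_left (h (Γ.tr s a)) hx
  unfold bellman
  split_ifs
  exacts [ciInf_le_ciInf_add hstep, ciSup_le_ciSup_add hstep]

theorem contractingWith_bellman [Fintype S] (hx₀ : 0 ≤ x) (hx₁ : x < 1) :
    ContractingWith x.toNNReal (Γ.bellman x) := by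
  refine ⟨Real.toNNReal_lt_one.2 hx₁, LipschitzWith.of_dist_le_mul fun v w => ?_⟩
  rw [Real.coe_toNNReal x hx₀, dist_pi_le_iff (by positivity)]
  have hle : ∀ v w : S → ℝ, ∀ s, v s ≤ w s + dist v w := fun v w s => by
    have := dist_le_pi_dist v w s
    rw [Real.dist_eq] at this
    linarith [le_abs_self (v s - w s)]
  intro s
  rw [Real.dist_eq, abs_sub_le_iff]
  have h₁ := bellman_le_add (Γ := Γ) hx₀ (hle v w) s
  have h₂ := bellman_le_add (Γ := Γ) hx₀ (hle w v) s
  rw [dist_comm w v] at h₂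
  constructor <;> linarith

variable [Finite S]

theorem exists_abs_price_le : ∃ M, ∀ s a, |Γ.price s a| ≤ M :=
  let ⟨M, hM⟩ := Finite.exists_le fun q : S × A => |Γ.price q.1 q.2|
  ⟨M, fun s a => hM (s, a)⟩

theorem discountedPayoff_eq_add (σ : S → A) (hx₀ : 0 ≤ x) (hx₁ : x < 1) (s : S) :
    Γ.discountedPayoff σ x s = Γ.price s (σ s) + x * Γ.discountedPayoff σ x (Γ.next σ s) := by
  obtain ⟨M, hM⟩ := exists_abs_price_le (Γ := Γ)
  rw [discountedPayoff, (summable_pow_mul_of_abs_le (fun i => hM _ _) hx₀ hx₁).tsum_eq_zero_add,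
    discountedPayoff, ← tsum_mul_left]
  simp only [pow_zero, one_mul, Function.iterate_zero_apply, Function.iterate_succ_apply, pow_succ]
  exact congrArg _ (tsum_congr fun i => by ring)

theorem eq_discountedPayoff_of_forall_eq {σ : S → A} {v : S → ℝ} (hx₀ : 0 ≤ x) (hx₁ : x < 1)
    (hv : ∀ s, v s = Γ.price s (σ s) + x * v (Γ.next σ s)) : v = Γ.discountedPayoff σ x := by
  refine sub_eq_zero.1 (eq_zero_of_forall_eq_mul_comp (f := Γ.next σ)
    (abs_lt.2 ⟨by linarith, hx₁⟩) fun s => ?_)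
  rw [Pi.sub_apply, Pi.sub_apply, hv s, discountedPayoff_eq_add σ hx₀ hx₁ s]
  ring

theorem exists_hasLaurentExpansion_discountedPayoff (σ : S → A) (s : S) :
    ∃ g b, HasLaurentExpansion (fun x => Γ.discountedPayoff σ x s) g b := by
  obtain ⟨p, c, hc, hper⟩ := exists_periodic_iterate (Γ.next σ) s
  obtain ⟨M, hM⟩ := exists_abs_price_le (Γ := Γ)
  exact exists_hasLaurentExpansion_of_periodic hc (fun i => hM _ _)
    fun n => congrArg (fun t => Γ.price t (σ t)) (hper n)

theorem exists_isDiscountOptimal (hx₀ : 0 ≤ x) (hx₁ : x < 1) :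
    ∃ σ, Γ.IsDiscountOptimal σ x := by
  have := Fintype.ofFinite S
  set v := ContractingWith.fixedPoint _ (contractingWith_bellman (Γ := Γ) hx₀ hx₁)
  have hv : ∀ s, Γ.bellman x v s = v s :=
    congrFun (ContractingWith.fixedPoint_isFixedPt (contractingWith_bellman hx₀ hx₁))
  have hopt : ∀ s, ∃ a ∈ Γ.avail s, Γ.price s a + x * v (Γ.tr s a) = Γ.bellman x v s := by
    intro s
    have : Nonempty (Γ.avail s) := (Γ.avail_nonempty s).to_subtype
    unfold bellman
    split_ifs
    · obtain ⟨⟨a, ha⟩, h⟩ := exists_eq_ciInf_of_finite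
        (f := fun a : Γ.avail s => Γ.price s a + x * v (Γ.tr s a))
      exact ⟨a, ha, h⟩
    · obtain ⟨⟨a, ha⟩, h⟩ := exists_eq_ciSup_of_finite
        (f := fun a : Γ.avail s => Γ.price s a + x * v (Γ.tr s a))
      exact ⟨a, ha, h⟩
  choose σ hσ hσv using hopt
  have hW : v = Γ.discountedPayoff σ x :=
    eq_discountedPayoff_of_forall_eq hx₀ hx₁ fun s => ((hσv s).trans (hv s)).symm
  refine ⟨σ, hσ, fun s hs a ha => ?_, fun s hs a ha => ?_⟩
  · rw [← hW, ← hv s, bellman, if_pos hs]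
    exact ciInf_le (Finite.bddBelow_range _) (⟨a, ha⟩ : Γ.avail s)
  · rw [← hW, ← hv s, bellman, if_neg hs]
    exact le_ciSup (f := fun a : Γ.avail s => Γ.price s a + x * v (Γ.tr s a))
      (Finite.bddAbove_range _) ⟨a, ha⟩

theorem exists_frequently_isDiscountOptimal :
    ∃ σ, ∃ᶠ x in 𝓝[<] (1 : ℝ), Γ.IsDiscountOptimal σ x := by
  by_contra! h
  obtain ⟨x, hx, hx₀, hx₁⟩ :=
    ((eventually_all (ι := S → A).2 h).and (Ioo_mem_nhdsLT one_pos)).exists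
  obtain ⟨σ, hσ⟩ := exists_isDiscountOptimal (Γ := Γ) hx₀.le hx₁
  exact hx σ hσ

variable (Γ) in
theorem exists_isGainBiasPair : ∃ G B σ, Γ.IsGainBiasPair G B σ := by
  obtain ⟨σ, hσ⟩ := exists_frequently_isDiscountOptimal (Γ := Γ)
  choose G B hGB using exists_hasLaurentExpansion_discountedPayoff (Γ := Γ) σ
  have hbellman : ∀ s, ∃ᶠ x in 𝓝[<] (1 : ℝ), Γ.discountedPayoff σ x s =
      Γ.price s (σ s) + x * Γ.discountedPayoff σ x (Γ.tr s (σ s)) := fun s =>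
    Eventually.frequently <| Filter.mem_of_superset (Ioo_mem_nhdsLT one_pos)
      fun x hx => discountedPayoff_eq_add σ hx.1.le hx.2 s
  refine ⟨G, B, σ, hσ.exists.choose_spec.mem_avail, fun s => ?_, fun s => ?_,
    fun s hs a ha => ?_, fun s hs a ha => ?_⟩
  · exact (hGB s).ge_of_frequently_ge (hGB _) ((hbellman s).mono fun x hx => hx.ge)
  · exact (hGB s).le_of_frequently_le (hGB _) ((hbellman s).mono fun x hx => hx.le)
  · exact (hGB s).le_of_frequently_le (hGB _) (hσ.mono fun x hx => hx.le_of_isMin s hs a ha)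
  · exact (hGB s).ge_of_frequently_ge (hGB _)
      (hσ.mono fun x hx => hx.ge_of_not_isMin s hs a ha)

end Discounted

section MeanPayoff

variable {Γ} {μ χ : FinPlay S A → A} {s : S}

theorem IsLowerStep.negPrice {G B : S → ℝ} {a : A} (h : Γ.IsLowerStep G B s a) :
    Γ.negPrice.IsUpperStep (-G) (-B) s a := by
  refine ⟨neg_le_neg h.1, fun e => ?_⟩
  have := h.2 (neg_inj.1 e)
  simp only [GameArena.negPrice, Pi.neg_apply]
  linarith

theorem hist_negPrice : Γ.negPrice.hist = Γ.hist := by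
  funext μ χ s n
  induction n with
  | zero => rfl
  | succ n ih => rw [hist, hist, ih]; rfl

theorem runState_negPrice : Γ.negPrice.runState = Γ.runState := by
  unfold runState
  rw [hist_negPrice]

theorem runAct_negPrice : Γ.negPrice.runAct = Γ.runAct := by
  unfold runAct
  rw [hist_negPrice]
  rfl

theorem AMin_negPrice : Γ.negPrice.AMin μ χ s = -Γ.AMax μ χ s := by
  rw [AMin, AMax, ← EReal.limsup_neg]
  congr 1
  funext n
  rw [Pi.neg_apply, ← EReal.coe_neg, avg, avg, runState_negPrice, runAct_negPrice]
  simp only [negPrice, sum_neg_distrib, neg_div]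

theorem runAct_mem_avail (hμ : Γ.IsMinStrategy μ) (hχ : Γ.IsMaxStrategy χ) (n : ℕ) :
    Γ.runAct μ χ s n ∈ Γ.avail (Γ.runState μ χ s n) := by
  unfold runAct runState
  split_ifs with h
  exacts [hμ _ h, hχ _ h]

theorem runAct_of_isMin {σ : S → A} {n : ℕ}
    (h : Γ.isMin (Γ.runState (fun ρ => σ (last ρ)) χ s n)) :
    Γ.runAct (fun ρ => σ (last ρ)) χ s n = σ (Γ.runState (fun ρ => σ (last ρ)) χ s n) :=
  if_pos h

theorem runAct_of_not_isMin {σ : S → A} {n : ℕ}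
    (h : ¬ Γ.isMin (Γ.runState μ (fun ρ => σ (last ρ)) s n)) :
    Γ.runAct μ (fun ρ => σ (last ρ)) s n = σ (Γ.runState μ (fun ρ => σ (last ρ)) s n) :=
  if_neg h

variable [Finite S] {G B : S → ℝ}

theorem AMin_le_of_isUpperStep
    (h : ∀ n, Γ.IsUpperStep G B (Γ.runState μ χ s n) (Γ.runAct μ χ s n)) :
    Γ.AMin μ χ s ≤ G s := by
  -- `G` is antitone along the run and takes finitely many values, so it is eventually constant;
  -- from then on the prices telescope against `B`.
  set st := Γ.runState μ χ s
  have hanti : Antitone (G ∘ st) := antitone_nat_of_succ_le fun n => (h n).1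
  obtain ⟨N, hN⟩ := hanti.exists_forall_ge_eq_of_finite_range
    ((Set.finite_range G).subset (Set.range_comp_subset_range _ _))
  obtain ⟨M, hM⟩ := Finite.exists_le fun t => |B t|
  obtain ⟨C, hC⟩ := exists_sum_range_le_of_le_add_sub
    (p := fun n => Γ.price (st n) (Γ.runAct μ χ s n)) (b := B ∘ st) (g := G (st N))
    (fun n => hM _) fun n hn => by
      have hn' : G (st n) = G (st N) := hN n hn
      have : _ - _ + B (st (n + 1)) ≤ _ := (h n).2 ((hN (n + 1) (by omega)).trans hn'.symm)
      simp only [Function.comp_apply]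
      linarith
  calc Γ.AMin μ χ s ≤ G (st N) := limsup_avg_le_of_sum_range_le hC
    _ ≤ G s := EReal.coe_le_coe_iff.2 (hanti (Nat.zero_le N))

theorem le_AMax_of_isLowerStep
    (h : ∀ n, Γ.IsLowerStep G B (Γ.runState μ χ s n) (Γ.runAct μ χ s n)) :
    G s ≤ Γ.AMax μ χ s := by
  have := Γ.negPrice.AMin_le_of_isUpperStep (s := s) (μ := μ) (χ := χ) (G := -G) (B := -B)
    fun n => by simpa only [runState_negPrice, runAct_negPrice] using (h n).negPrice
  rwa [AMin_negPrice, Pi.neg_apply, EReal.coe_neg, EReal.neg_le_neg_iff] at this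

end MeanPayoff

theorem positional_comp_last (σ : S → A) : Positional fun ρ : FinPlay S A => σ (last ρ) :=
  fun _ _ h => congrArg σ h

section GainBiasPair

variable {Γ} {G B : S → ℝ} {σ : S → A}

theorem IsGainBiasPair.isMinStrategy (h : Γ.IsGainBiasPair G B σ) :
    Γ.IsMinStrategy fun ρ => σ (last ρ) :=
  fun _ _ => h.mem_avail _

theorem IsGainBiasPair.isMaxStrategy (h : Γ.IsGainBiasPair G B σ) :
    Γ.IsMaxStrategy fun ρ => σ (last ρ) :=
  fun _ _ => h.mem_avail _

variable [Finite S]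

theorem IsGainBiasPair.AMin_le (h : Γ.IsGainBiasPair G B σ)
    {χ : FinPlay S A → A} (hχ : Γ.IsMaxStrategy χ) (s : S) :
    Γ.AMin (fun ρ => σ (last ρ)) χ s ≤ G s := by
  refine AMin_le_of_isUpperStep (B := B) fun n => ?_
  by_cases hs : Γ.isMin (Γ.runState (fun ρ => σ (last ρ)) χ s n)
  · rw [runAct_of_isMin hs]
    exact h.isUpperStep_self _
  · exact h.isUpperStep_of_not_isMin _ hs _ (runAct_mem_avail h.isMinStrategy hχ n)

theorem IsGainBiasPair.le_AMax (h : Γ.IsGainBiasPair G B σ)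
    {μ : FinPlay S A → A} (hμ : Γ.IsMinStrategy μ) (s : S) :
    G s ≤ Γ.AMax μ (fun ρ => σ (last ρ)) s := by
  refine le_AMax_of_isLowerStep (B := B) fun n => ?_
  by_cases hs : Γ.isMin (Γ.runState μ (fun ρ => σ (last ρ)) s n)
  · exact h.isLowerStep_of_isMin _ hs _ (runAct_mem_avail hμ h.isMaxStrategy n)
  · rw [runAct_of_not_isMin hs]
    exact h.isLowerStep_self _

end GainBiasPair

theorem lowerVal_le_upperVal (s : S) : Γ.lowerVal s ≤ Γ.upperVal s :=
  iSup_le fun χ => le_iInf fun μ =>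
    calc ⨅ μ' : {μ // Γ.IsMinStrategy μ}, Γ.AMax μ'.1 χ.1 s
        ≤ Γ.AMax μ.1 χ.1 s := iInf_le _ μ
      _ ≤ Γ.AMin μ.1 χ.1 s := liminf_le_limsup
      _ ≤ ⨆ χ' : {χ // Γ.IsMaxStrategy χ}, Γ.AMin μ.1 χ'.1 s :=
        le_iSup (fun χ' : {χ // Γ.IsMaxStrategy χ} => Γ.AMin μ.1 χ'.1 s) χ

theorem eq_upperVal_lowerVal_of_saddle {μ χ : FinPlay S A → A} (hμ : Γ.IsMinStrategy μ)
    (hχ : Γ.IsMaxStrategy χ) {s : S} {v : EReal}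
    (hup : ⨆ χ' : {χ // Γ.IsMaxStrategy χ}, Γ.AMin μ χ'.1 s ≤ v)
    (hlow : v ≤ ⨅ μ' : {μ // Γ.IsMinStrategy μ}, Γ.AMax μ'.1 χ s) :
    (⨆ χ' : {χ // Γ.IsMaxStrategy χ}, Γ.AMin μ χ'.1 s) = v ∧
      (⨅ μ' : {μ // Γ.IsMinStrategy μ}, Γ.AMax μ'.1 χ s) = v ∧
      Γ.upperVal s = v ∧ Γ.lowerVal s = v := by
  have hupper : Γ.upperVal s ≤ ⨆ χ' : {χ // Γ.IsMaxStrategy χ}, Γ.AMin μ χ'.1 s :=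
    iInf_le (fun μ' : {μ // Γ.IsMinStrategy μ} =>
      ⨆ χ' : {χ // Γ.IsMaxStrategy χ}, Γ.AMin μ'.1 χ'.1 s) ⟨μ, hμ⟩
  have hlower : (⨅ μ' : {μ // Γ.IsMinStrategy μ}, Γ.AMax μ'.1 χ s) ≤ Γ.lowerVal s :=
    le_iSup (fun χ' : {χ // Γ.IsMaxStrategy χ} =>
      ⨅ μ' : {μ // Γ.IsMinStrategy μ}, Γ.AMax μ'.1 χ'.1 s) ⟨χ, hχ⟩
  have hweak := Γ.lowerVal_le_upperVal s
  refine ⟨le_antisymm hup ?_, le_antisymm ?_ hlow, le_antisymm (hupper.trans hup) ?_,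
    le_antisymm ?_ (hlow.trans hlower)⟩
  · exact hlow.trans (hlower.trans (hweak.trans hupper))
  · exact hlower.trans (hweak.trans (hupper.trans hup))
  · exact hlow.trans (hlower.trans hweak)
  · exact hweak.trans (hupper.trans hup)

end GameArena

/-- Mean-payoff games on finite game arenas are positionally
determined: `Val*(s) = Val_*(s)` for every state `s`, and there are a
positional Min strategy `μ*` and a positional Max strategy `χ*` that are
optimal from every state. -/
theorem positional_determinacy_finite {S A : Type} [Finite S] [Finite A]
    (Γ : GameArena S A) :
    (∀ s : S, Γ.upperVal s = Γ.lowerVal s) ∧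
    ∃ μstar : GameArena.FinPlay S A → A, Γ.IsMinStrategy μstar ∧
      GameArena.Positional μstar ∧
    ∃ χstar : GameArena.FinPlay S A → A, Γ.IsMaxStrategy χstar ∧
      GameArena.Positional χstar ∧
    ∀ s : S,
      (⨆ χ : {χ // Γ.IsMaxStrategy χ}, Γ.AMin μstar χ.1 s) = Γ.upperVal s ∧
      (⨅ μ : {μ // Γ.IsMinStrategy μ}, Γ.AMax μ.1 χstar s) = Γ.upperVal s := by
  obtain ⟨G, B, σ, hGB⟩ := Γ.exists_isGainBiasPair
  have hsaddle := fun s => Γ.eq_upperVal_lowerVal_of_saddle hGB.isMinStrategy hGB.isMaxStrategy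
    (iSup_le fun χ => hGB.AMin_le χ.2 s) (le_iInf fun μ => hGB.le_AMax μ.2 s)
  refine ⟨fun s => (hsaddle s).2.2.1.trans (hsaddle s).2.2.2.symm,
    _, hGB.isMinStrategy, GameArena.positional_comp_last σ,
    _, hGB.isMaxStrategy, GameArena.positional_comp_last σ, fun s => ⟨?_, ?_⟩⟩
  · exact (hsaddle s).1.trans (hsaddle s).2.2.1.symm
  · exact (hsaddle s).2.1.trans (hsaddle s).2.2.1.symm
end

section
/- If ζ is a thick clock region, then for every valuation ν ∈ ζ there exists ε > 0 such that [ν + ε] = [ν]. -/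
/-- A clock region: an equivalence class of the region-equivalence relation
inside the set of (nonnegative) clock valuations. -/
def IsRegion {𝒞 : Type} (K : ℕ) (ζ : Set (𝒞 → ℝ)) : Prop :=
  ∃ ν₀ : 𝒞 → ℝ, (∀ c, 0 ≤ ν₀ c) ∧
    ζ = {ν | (∀ c, 0 ≤ ν c) ∧ RegionEquiv K ν₀ ν}

/-- The valuation `ν + t`. -/
def shiftVal {𝒞 : Type} (ν : 𝒞 → ℝ) (t : ℝ) : 𝒞 → ℝ := fun c => ν c + t

/-- A region is thin if `[ν + ε] ≠ [ν]` for every `ν ∈ ζ` and every `ε > 0`. -/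
def IsThin {𝒞 : Type} (K : ℕ) (ζ : Set (𝒞 → ℝ)) : Prop :=
  ∀ ν ∈ ζ, ∀ ε : ℝ, 0 < ε → ¬ RegionEquiv K ν (shiftVal ν ε)

/-- A region is thick if some `ν ∈ ζ` and `ε > 0` satisfy `[ν + ε] = [ν]`. -/
def IsThick {𝒞 : Type} (K : ℕ) (ζ : Set (𝒞 → ℝ)) : Prop :=
  ∃ ν ∈ ζ, ∃ ε : ℝ, 0 < ε ∧ RegionEquiv K ν (shiftVal ν ε)

/-- If `ζ` is a thick clock region, then for every valuation
`ν ∈ ζ` there exists `ε > 0` with `[ν + ε] = [ν]`. -/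
theorem thick_region_locally_open {𝒞 : Type} [Fintype 𝒞] [Nonempty 𝒞]
    (K : ℕ) (ζ : Set (𝒞 → ℝ)) (hζ : IsRegion K ζ) (hthick : IsThick K ζ) :
    ∀ ν ∈ ζ, ∃ ε : ℝ, 0 < ε ∧ RegionEquiv K ν (shiftVal ν ε) := by
  classical
  obtain ⟨ν₀, hν₀, rfl⟩ := hζ
  obtain ⟨μ, hμ, ε₀, hε₀, hre⟩ := hthick
  intro ν hν
  have hνμ : RegionEquiv K ν μ := fun φ hb => ((hν.2 φ hb).symm).trans (hμ.2 φ hb)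
  have hne : ∀ c : 𝒞, ∀ i : ℕ, i ≤ K → ν c ≠ (i : ℝ) := by
    intro c i hi hceq
    have h1 : (ClockConstraint.single c ClockRel.eq i).sat μ :=
      (hνμ (ClockConstraint.single c ClockRel.eq i) hi).mp hceq
    have h2 := (hre (ClockConstraint.single c ClockRel.eq i) hi).mp h1
    simp only [ClockConstraint.sat, ClockRel.holds, shiftVal] at h1 h2
    linarith
  obtain ⟨ε, hεpos, hεlt⟩ : ∃ ε : ℝ, 0 < ε ∧ ∀ c : 𝒞, ∀ i : ℕ, i ≤ K → ν c < i → ν c + ε < i := by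
    set S : Finset (𝒞 × ℕ) := Finset.univ ×ˢ Finset.range (K+1) with hSdef
    have hS : S.Nonempty := ⟨(Classical.arbitrary 𝒞, 0), by simp [hSdef]⟩
    set f : 𝒞 × ℕ → ℝ := fun p => if ν p.1 < p.2 then ((p.2 : ℝ) - ν p.1)/2 else 1 with hfdef
    refine ⟨S.inf' hS f, ?_, ?_⟩
    · rw [Finset.lt_inf'_iff]
      intro p _
      simp only [hfdef]
      split
      · next h => linarith
      · norm_num
    · intro c i hi hlt
      have hmem : (c, i) ∈ S := by simp [hSdef, Nat.lt_succ_of_le hi]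
      have hle : S.inf' hS f ≤ f (c, i) := Finset.inf'_le _ hmem
      rw [hfdef] at hle
      simp only [if_pos hlt] at hle
      linarith
  refine ⟨ε, hεpos, ?_⟩
  have hdiff : ∀ c c' : 𝒞, shiftVal ν ε c - shiftVal ν ε c' = ν c - ν c' := by
    intro c c'; simp [shiftVal]
  intro φ hb
  cases φ with
  | diff c c' r i => simp only [ClockConstraint.sat, hdiff]
  | single c r i =>
    have hb' : i ≤ K := hb
    have hne' := hne c i hb'
    rcases lt_or_gt_of_ne hne' with h | h
    · have h2 := hεlt c i hb' h
      cases r <;> simp only [ClockConstraint.sat, ClockRel.holds, shiftVal] <;>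
        constructor <;> intro <;> linarith
    · cases r <;> simp only [ClockConstraint.sat, ClockRel.holds, shiftVal] <;>
        constructor <;> intro <;> linarith
end

section
/- Let ζ and ζ' be clock regions such that ζ' is the time successor of ζ. Then if ζ is thin, ζ' is thick, and if ζ is thick, ζ' is thin. -/
/-- `ζ' ≠ ζ` is the time successor of `ζ`: some `ν ∈ ζ` and `t > 0` satisfy
`ν + t ∈ ζ'` and `ν + t' ∈ ζ ∪ ζ'` for all `t' ∈ [0, t]`. -/
def IsTimeSuccessor {𝒞 : Type} (K : ℕ) (ζ ζ' : Set (𝒞 → ℝ)) : Prop :=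
  ζ' ≠ ζ ∧ ∃ ν ∈ ζ, ∃ t : ℝ, 0 < t ∧ shiftVal ν t ∈ ζ' ∧
    ∀ t' : ℝ, 0 ≤ t' → t' ≤ t → shiftVal ν t' ∈ ζ ∪ ζ'


namespace TSAux

variable {𝒞 : Type} {K : ℕ}

theorem equiv_refl (ν : 𝒞 → ℝ) : RegionEquiv K ν ν := fun _ _ => Iff.rfl

theorem equiv_symm {ν ν' : 𝒞 → ℝ} (h : RegionEquiv K ν ν') : RegionEquiv K ν' ν :=
  fun φ hφ => (h φ hφ).symm

theorem equiv_trans {a b c : 𝒞 → ℝ} (h1 : RegionEquiv K a b) (h2 : RegionEquiv K b c) :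
    RegionEquiv K a c := fun φ hφ => (h1 φ hφ).trans (h2 φ hφ)

theorem mem_iff {ζ : Set (𝒞 → ℝ)} (hζ : IsRegion K ζ) {μ : 𝒞 → ℝ} (hμ : μ ∈ ζ)
    (μ' : 𝒞 → ℝ) : μ' ∈ ζ ↔ (∀ c, 0 ≤ μ' c) ∧ RegionEquiv K μ μ' := by
  obtain ⟨ν₀, h0, rfl⟩ := hζ
  simp only [Set.mem_setOf_eq] at hμ ⊢
  constructor
  · rintro ⟨hn, he⟩; exact ⟨hn, equiv_trans (equiv_symm hμ.2) he⟩
  · rintro ⟨hn, he⟩; exact ⟨hn, equiv_trans hμ.2 he⟩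

theorem mem_equiv {ζ : Set (𝒞 → ℝ)} (hζ : IsRegion K ζ) {μ μ' : 𝒞 → ℝ}
    (hμ : μ ∈ ζ) (hμ' : μ' ∈ ζ) : RegionEquiv K μ μ' :=
  ((mem_iff hζ hμ μ').mp hμ').2

theorem nonneg_of_mem {ζ : Set (𝒞 → ℝ)} (hζ : IsRegion K ζ) {μ : 𝒞 → ℝ}
    (hμ : μ ∈ ζ) : ∀ c, 0 ≤ μ c :=
  ((mem_iff hζ hμ μ).mp hμ).1

theorem equiv_shift_down {ν : 𝒞 → ℝ} {t t1 : ℝ} (h : RegionEquiv K ν (shiftVal ν t))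
    (h0 : 0 ≤ t1) (h1 : t1 ≤ t) : RegionEquiv K ν (shiftVal ν t1) := by
  intro φ hφ
  cases φ with
  | diff c c' r i =>
      show ClockRel.holds r (ν c - ν c') ↑i ↔
        ClockRel.holds r (shiftVal ν t1 c - shiftVal ν t1 c') ↑i
      have hrw : shiftVal ν t1 c - shiftVal ν t1 c' = ν c - ν c' := by
        simp only [shiftVal]; ring
      rw [hrw]
  | single c r i =>
      have hlt : (ν c < ↑i ↔ ν c + t < ↑i) := h (.single c .lt i) hφ
      have hgt : ((i:ℝ) < ν c ↔ (i:ℝ) < ν c + t) := h (.single c .gt i) hφ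
      have heq : (ν c = ↑i ↔ ν c + t = ↑i) := h (.single c .eq i) hφ
      have hle : (ν c ≤ ↑i ↔ ν c + t ≤ ↑i) := h (.single c .le i) hφ
      have hge : ((i:ℝ) ≤ ν c ↔ (i:ℝ) ≤ ν c + t) := h (.single c .ge i) hφ
      cases r with
      | lt =>
          show ν c < ↑i ↔ ν c + t1 < ↑i
          exact ⟨fun hx => by have := hlt.mp hx; linarith, fun hx => by linarith⟩
      | gt =>
          show (i:ℝ) < ν c ↔ (i:ℝ) < ν c + t1
          exact ⟨fun hx => by linarith, fun hx => by
            have := hgt.mpr (by linarith); linarith⟩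
      | eq =>
          show ν c = ↑i ↔ ν c + t1 = ↑i
          constructor
          · intro hx; have := heq.mp hx; linarith
          · intro hx
            have h2 : (i:ℝ) ≤ ν c + t := by linarith
            have h3 := hge.mpr h2
            linarith
      | le =>
          show ν c ≤ ↑i ↔ ν c + t1 ≤ ↑i
          exact ⟨fun hx => by have := hle.mp hx; linarith, fun hx => by linarith⟩
      | ge =>
          show (i:ℝ) ≤ ν c ↔ (i:ℝ) ≤ ν c + t1
          exact ⟨fun hx => by linarith, fun hx => by
            have := hge.mpr (by linarith); linarith⟩

theorem equiv_step {μ : 𝒞 → ℝ} {ε : ℝ} (hε : 0 < ε)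
    (h : ∀ c (i : ℕ), i ≤ K → ¬(μ c ≤ ↑i ∧ (i:ℝ) ≤ μ c + ε)) :
    RegionEquiv K μ (shiftVal μ ε) := by
  intro φ hφ
  cases φ with
  | diff c c' r i =>
      show ClockRel.holds r (μ c - μ c') ↑i ↔
        ClockRel.holds r (shiftVal μ ε c - shiftVal μ ε c') ↑i
      have hrw : shiftVal μ ε c - shiftVal μ ε c' = μ c - μ c' := by
        simp only [shiftVal]; ring
      rw [hrw]
  | single c r i =>
      have key : μ c ≤ ↑i → μ c + ε < ↑i := by
        intro hc
        by_contra hx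
        push_neg at hx
        exact h c i hφ ⟨hc, hx⟩
      cases r with
      | lt =>
          show μ c < ↑i ↔ μ c + ε < ↑i
          exact ⟨fun hx => key hx.le, fun hx => by linarith⟩
      | gt =>
          show (i:ℝ) < μ c ↔ (i:ℝ) < μ c + ε
          constructor
          · intro hx; linarith
          · intro hx; by_contra hy; push_neg at hy; have := key hy; linarith
      | eq =>
          show μ c = ↑i ↔ μ c + ε = ↑i
          constructor
          · intro hx; have := key (le_of_eq hx); linarith
          · intro hx; have := key (by linarith); linarith
      | le =>
          show μ c ≤ ↑i ↔ μ c + ε ≤ ↑i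
          exact ⟨fun hx => (key hx).le, fun hx => by linarith⟩
      | ge =>
          show (i:ℝ) ≤ μ c ↔ (i:ℝ) ≤ μ c + ε
          constructor
          · intro hx; linarith
          · intro hx; by_contra hy; push_neg at hy; have := key hy.le; linarith

theorem sep [Fintype 𝒞] [Nonempty 𝒞] {μ : 𝒞 → ℝ}
    (h : ∀ c (i : ℕ), i ≤ K → μ c ≠ ↑i) :
    ∃ δ : ℝ, 0 < δ ∧ ∀ c (i : ℕ), i ≤ K → δ < |μ c - ↑i| := by
  classical
  have hne : ((Finset.univ : Finset 𝒞) ×ˢ Finset.range (K+1)).Nonempty := by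
    refine ⟨(Classical.arbitrary 𝒞, 0), ?_⟩
    simp
  set m := ((Finset.univ : Finset 𝒞) ×ˢ Finset.range (K+1)).inf' hne
    (fun p => |μ p.1 - (p.2 : ℝ)|) with hm
  have hmpos : 0 < m := by
    rw [hm, Finset.lt_inf'_iff]
    rintro ⟨c, i⟩ hp
    have hik : i ≤ K := by
      simp only [Finset.mem_product, Finset.mem_range] at hp
      omega
    exact abs_pos.mpr (sub_ne_zero.mpr (h c i hik))
  refine ⟨m / 2, by linarith, ?_⟩
  intro c i hi
  have hmem : (c, i) ∈ ((Finset.univ : Finset 𝒞) ×ˢ Finset.range (K+1)) := by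
    simp only [Finset.mem_product, Finset.mem_range, Finset.mem_univ, true_and]
    omega
  have hle : m ≤ |μ c - ↑i| := Finset.inf'_le _ hmem
  linarith

theorem room [Fintype 𝒞] [Nonempty 𝒞] {μ : 𝒞 → ℝ}
    (h : ∀ c (i : ℕ), i ≤ K → μ c ≠ ↑i) :
    ∃ δ : ℝ, 0 < δ ∧ ∀ δ' : ℝ, 0 < δ' → δ' ≤ δ →
      RegionEquiv K μ (shiftVal μ δ') ∧ RegionEquiv K (fun c => μ c - δ') μ := by
  obtain ⟨δ, hδ, hsep⟩ := sep h
  refine ⟨δ, hδ, fun δ' hδ'0 hδ'1 => ⟨?_, ?_⟩⟩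
  · apply equiv_step hδ'0
    intro c i hi hcon
    have h1 := hsep c i hi
    rw [abs_of_nonpos (by linarith [hcon.1])] at h1
    linarith [hcon.2]
  · have hkey : RegionEquiv K (fun c => μ c - δ') (shiftVal (fun c => μ c - δ') δ') := by
      apply equiv_step hδ'0
      intro c i hi hcon
      have h1 := hsep c i hi
      rcases abs_cases (μ c - (i:ℝ)) with ⟨he, _⟩ | ⟨he, _⟩
      · rw [he] at h1
        have := hcon.1
        linarith
      · rw [he] at h1
        have := hcon.2
        linarith
    have hid : shiftVal (fun c => μ c - δ') δ' = μ := by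
      funext c; simp [shiftVal]
    rwa [hid] at hkey

theorem noInt_of_equiv {μ : 𝒞 → ℝ} {ε : ℝ} (hε : 0 < ε)
    (h : RegionEquiv K μ (shiftVal μ ε)) : ∀ c (i : ℕ), i ≤ K → μ c ≠ ↑i := by
  intro c i hi heq
  have h2 : μ c + ε = ↑i := (h (.single c .eq i) hi).mp heq
  linarith

theorem noInt_transfer {μ μ' : 𝒞 → ℝ} (h : RegionEquiv K μ μ')
    (hμ : ∀ c (i : ℕ), i ≤ K → μ c ≠ ↑i) : ∀ c (i : ℕ), i ≤ K → μ' c ≠ ↑i :=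
  fun c i hi heq => hμ c i hi ((h (.single c .eq i) hi).mpr heq)

end TSAux

theorem time_successor_thin_thick' {𝒞 : Type} [Fintype 𝒞] [Nonempty 𝒞]
    (K : ℕ) (ζ ζ' : Set (𝒞 → ℝ)) (hζ : IsRegion K ζ) (hζ' : IsRegion K ζ')
    (hsucc : IsTimeSuccessor K ζ ζ') :
    (IsThin K ζ → IsThick K ζ') ∧ (IsThick K ζ → IsThin K ζ') := by
  obtain ⟨hne, ν, hν, t, ht, hνt, hall⟩ := hsucc
  have hdisj : ∀ μ, μ ∈ ζ → μ ∉ ζ' := by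
    intro μ h1 h2
    apply hne
    ext x
    rw [TSAux.mem_iff hζ' h2 x, TSAux.mem_iff hζ h1 x]
  have hνnn : ∀ c, 0 ≤ ν c := TSAux.nonneg_of_mem hζ hν
  constructor
  · intro hthin
    have hmid : shiftVal ν (t/2) ∈ ζ' := by
      rcases hall (t/2) (by linarith) (by linarith) with hm | hm
      · exact absurd (TSAux.mem_equiv hζ hν hm) (hthin ν hν (t/2) (by linarith))
      · exact hm
    refine ⟨shiftVal ν (t/2), hmid, t/2, by linarith, ?_⟩
    have he : RegionEquiv K (shiftVal ν (t/2)) (shiftVal ν t) := TSAux.mem_equiv hζ' hmid hνt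
    have hrw : shiftVal (shiftVal ν (t/2)) (t/2) = shiftVal ν t := by
      funext c; simp only [shiftVal]; ring
    rwa [hrw]
  · intro hthick
    obtain ⟨μ₀, hμ₀, ε₀, hε₀, he₀⟩ := hthick
    have hniμ₀ := TSAux.noInt_of_equiv (K := K) hε₀ he₀
    have hniν : ∀ c (i : ℕ), i ≤ K → ν c ≠ ↑i :=
      TSAux.noInt_transfer (TSAux.mem_equiv hζ hμ₀ hν) hniμ₀
    intro μ' hμ' ε hε heqv
    have hniμ' := TSAux.noInt_of_equiv (K := K) hε heqv
    set S : Set ℝ := {x | 0 ≤ x ∧ x ≤ t ∧ RegionEquiv K ν (shiftVal ν x)} with hSdef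
    have h0S : (0:ℝ) ∈ S := by
      refine ⟨le_refl 0, le_of_lt ht, ?_⟩
      have hrw : shiftVal ν 0 = ν := by funext c; simp [shiftVal]
      rw [hrw]
      exact TSAux.equiv_refl ν
    have hbdd : BddAbove S := ⟨t, fun x hx => hx.2.1⟩
    set s := sSup S with hs
    have hs0 : 0 ≤ s := le_csSup hbdd h0S
    have hst : s ≤ t := csSup_le ⟨0, h0S⟩ (fun x hx => hx.2.1)
    have hSζ : ∀ x, x ∈ S → shiftVal ν x ∈ ζ := by
      intro x hx
      rw [TSAux.mem_iff hζ hν]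
      refine ⟨fun c => ?_, hx.2.2⟩
      have := hνnn c
      have := hx.1
      simp only [shiftVal]
      linarith
    rcases hall s hs0 hst with hmζ | hmζ'
    · have hes : RegionEquiv K ν (shiftVal ν s) := TSAux.mem_equiv hζ hν hmζ
      have hslt : s < t := lt_of_le_of_ne hst (by
        intro hst'
        apply hdisj _ hmζ
        rw [hst']
        exact hνt)
      have hni : ∀ c (i:ℕ), i ≤ K → shiftVal ν s c ≠ ↑i := TSAux.noInt_transfer hes hniν
      obtain ⟨δ, hδ, hroom⟩ := TSAux.room hni
      have hδ'0 : 0 < min δ (t - s) := lt_min hδ (by linarith)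
      have h2 := (hroom (min δ (t - s)) hδ'0 (min_le_left _ _)).1
      have heq2 : shiftVal (shiftVal ν s) (min δ (t - s)) = shiftVal ν (s + min δ (t - s)) := by
        funext c; simp only [shiftVal]; ring
      rw [heq2] at h2
      have hmemS : (s + min δ (t - s)) ∈ S := by
        refine ⟨by linarith, ?_, TSAux.equiv_trans hes h2⟩
        have := min_le_right δ (t - s)
        linarith
      have := le_csSup hbdd hmemS
      linarith
    · have hspos : 0 < s := by
        rcases lt_or_eq_of_le hs0 with hpos | hzero
        · exact hpos
        · exfalso
          apply hdisj ν hν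
          have hrw : shiftVal ν s = ν := by
            funext c; simp only [shiftVal, ← hzero]; ring
          rwa [hrw] at hmζ'
      have hes : RegionEquiv K μ' (shiftVal ν s) := TSAux.mem_equiv hζ' hμ' hmζ'
      have hni : ∀ c (i:ℕ), i ≤ K → shiftVal ν s c ≠ ↑i := TSAux.noInt_transfer hes hniμ'
      obtain ⟨δ, hδ, hroom⟩ := TSAux.room hni
      have hδ'0 : 0 < min δ s := lt_min hδ hspos
      have h2 := (hroom (min δ s) hδ'0 (min_le_left _ _)).2
      have heq2 : (fun c => shiftVal ν s c - min δ s) = shiftVal ν (s - min δ s) := by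
        funext c; simp only [shiftVal]; ring
      rw [heq2] at h2
      have hmem' : shiftVal ν (s - min δ s) ∈ ζ' := by
        rw [TSAux.mem_iff hζ' hmζ']
        refine ⟨fun c => ?_, TSAux.equiv_symm h2⟩
        have := hνnn c
        have := min_le_right δ s
        simp only [shiftVal]
        linarith
      obtain ⟨y, hyS, hy⟩ := exists_lt_of_lt_csSup ⟨0, h0S⟩
        (show s - min δ s < s by linarith)
      have hsd : (s - min δ s) ∈ S := by
        refine ⟨?_, ?_, TSAux.equiv_shift_down hyS.2.2 ?_ (le_of_lt hy)⟩
        · linarith [min_le_right δ s]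
        · linarith [hyS.2.1]
        · linarith [min_le_right δ s]
      exact hdisj _ (hSζ _ hsd) hmem'


/-- If `ζ'` is the time successor of the region `ζ`, then
`ζ` thin implies `ζ'` thick, and `ζ` thick implies `ζ'` thin. -/
theorem time_successor_thin_thick {𝒞 : Type} [Fintype 𝒞] [Nonempty 𝒞]
    (K : ℕ) (ζ ζ' : Set (𝒞 → ℝ)) (hζ : IsRegion K ζ) (hζ' : IsRegion K ζ')
    (hsucc : IsTimeSuccessor K ζ ζ') :
    (IsThin K ζ → IsThick K ζ') ∧ (IsThick K ζ → IsThin K ζ') := by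
  exact time_successor_thin_thick' K ζ ζ' hζ hζ' hsucc
end
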